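/- arXiv:2602.19328 — 8 statements merged into one kernel-verified Lean document; each statement's English description precedes it below -/
import Mathlib

section
/- Let z be a transport plan between the uniform probability weights on Fin r and on Fin s for the cost w. Then the function ẑ defined by ẑ((i,k),(j,ℓ)) = z(i,j)/(a·b) is a transport plan between the uniform probability weights on Fin r × Fin a and on Fin s × Fin b for the blow-up cost ŵ, and it has the same cost: ∑ ŵ·ẑ = ∑ w·z. Conversely, if ẑ is a transport plan between the uniform probability weights on Fin r × Fin a and on Fin s × Fin b for ŵ, then z defined by z(i,j) = ∑_{k<a} ∑_{ℓ<b} ẑ((i,k),(j,ℓ)) is a transport plan between the uniform probability weights on Fin r and on Fin s for w with the same cost. In particular, EMD(w, unif_{Fin r}, unif_{Fin s}) = EMD(ŵ, unif_{Fin r × Fin a}, unif_{Fin s × Fin b}). -/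
open Finset

/-- A transport plan between the weights `μ` and `ν`. -/
def IsPlan {L R : Type*} [Fintype L] [Fintype R] (μ : L → ℝ) (ν : R → ℝ)
    (z : L → R → ℝ) : Prop :=
  (∀ x y, 0 ≤ z x y) ∧ (∀ x, ∑ y, z x y = μ x) ∧ (∀ y, ∑ x, z x y = ν y)

/-- The cost of a transport plan `z` for the cost function `c`. -/
def planCost {L R : Type*} [Fintype L] [Fintype R] (c : L → R → ℝ) (z : L → R → ℝ) : ℝ :=
  ∑ x, ∑ y, c x y * z x y

/-- The earth mover's distance: the minimum cost of a transport plan. -/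
noncomputable def EMD {L R : Type*} [Fintype L] [Fintype R] (c : L → R → ℝ)
    (μ : L → ℝ) (ν : R → ℝ) : ℝ :=
  sInf {t | ∃ z, IsPlan μ ν z ∧ planCost c z = t}

set_option maxHeartbeats 1000000 in
/-- blowing up a transport plan between uniform weights on `Fin r` and `Fin s`
to one between uniform weights on `Fin r × Fin a` and `Fin s × Fin b` (and conversely),
preserving cost; consequently the two EMDs coincide. -/
theorem stmt0 (r s : ℕ) (hr : 0 < r) (hs : 0 < s) (hrs : r ≤ s)
    (q a b : ℕ) (hq : q = Nat.lcm r s) (ha : a = q / r) (hb : b = q / s)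
    (w : Fin r → Fin s → ℝ) (hw : ∀ i j, 0 ≤ w i j) :
    (∀ z : Fin r → Fin s → ℝ,
      IsPlan (fun _ => 1 / (r : ℝ)) (fun _ => 1 / (s : ℝ)) z →
        IsPlan (fun _ : Fin r × Fin a => 1 / (q : ℝ))
            (fun _ : Fin s × Fin b => 1 / (q : ℝ))
            (fun x y => z x.1 y.1 / ((a : ℝ) * (b : ℝ))) ∧
          planCost (fun (x : Fin r × Fin a) (y : Fin s × Fin b) => w x.1 y.1)
              (fun x y => z x.1 y.1 / ((a : ℝ) * (b : ℝ))) = planCost w z) ∧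
    (∀ zhat : Fin r × Fin a → Fin s × Fin b → ℝ,
      IsPlan (fun _ : Fin r × Fin a => 1 / (q : ℝ))
          (fun _ : Fin s × Fin b => 1 / (q : ℝ)) zhat →
        IsPlan (fun _ => 1 / (r : ℝ)) (fun _ => 1 / (s : ℝ))
            (fun i j => ∑ k : Fin a, ∑ ℓ : Fin b, zhat (i, k) (j, ℓ)) ∧
          planCost w (fun i j => ∑ k : Fin a, ∑ ℓ : Fin b, zhat (i, k) (j, ℓ)) =
            planCost (fun (x : Fin r × Fin a) (y : Fin s × Fin b) => w x.1 y.1) zhat) ∧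
    EMD w (fun _ => 1 / (r : ℝ)) (fun _ => 1 / (s : ℝ)) =
      EMD (fun (x : Fin r × Fin a) (y : Fin s × Fin b) => w x.1 y.1)
        (fun _ => 1 / (q : ℝ)) (fun _ => 1 / (q : ℝ)) := by
  have hrq : r * a = q := by subst ha hq; exact Nat.mul_div_cancel' (Nat.dvd_lcm_left r s)
  have hsq : s * b = q := by subst hb hq; exact Nat.mul_div_cancel' (Nat.dvd_lcm_right r s)
  have hq0 : 0 < q := by
    subst hq; exact Nat.pos_of_ne_zero (Nat.lcm_ne_zero hr.ne' hs.ne')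
  have ha0 : 0 < a := Nat.pos_of_ne_zero fun h => by subst h; simp at hrq; omega
  have hb0 : 0 < b := Nat.pos_of_ne_zero fun h => by subst h; simp at hsq; omega
  have hrR : (0:ℝ) < r := by exact_mod_cast hr
  have hsR : (0:ℝ) < s := by exact_mod_cast hs
  have haR : (0:ℝ) < a := by exact_mod_cast ha0
  have hbR : (0:ℝ) < b := by exact_mod_cast hb0
  have hqR : (0:ℝ) < q := by exact_mod_cast hq0
  have hrqR : (r:ℝ) * a = q := by exact_mod_cast hrq
  have hsqR : (s:ℝ) * b = q := by exact_mod_cast hsq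
  have part1 : ∀ z : Fin r → Fin s → ℝ,
      IsPlan (fun _ => 1 / (r : ℝ)) (fun _ => 1 / (s : ℝ)) z →
        IsPlan (fun _ : Fin r × Fin a => 1 / (q : ℝ))
            (fun _ : Fin s × Fin b => 1 / (q : ℝ))
            (fun x y => z x.1 y.1 / ((a : ℝ) * (b : ℝ))) ∧
          planCost (fun (x : Fin r × Fin a) (y : Fin s × Fin b) => w x.1 y.1)
              (fun x y => z x.1 y.1 / ((a : ℝ) * (b : ℝ))) = planCost w z := by
    intro z hz
    obtain ⟨hz0, hzr, hzc⟩ := hz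
    refine ⟨⟨fun x y => div_nonneg (hz0 _ _) (by positivity), ?_, ?_⟩, ?_⟩
    · intro x
      rw [Fintype.sum_prod_type]
      simp only [Finset.sum_const, Finset.card_univ, Fintype.card_fin, nsmul_eq_mul]
      have : ∑ j, (b:ℝ) * (z x.1 j / ((a:ℝ) * b)) = ((b:ℝ) / ((a:ℝ)*b)) * ∑ j, z x.1 j := by
        rw [Finset.mul_sum]; exact Finset.sum_congr rfl fun j _ => by ring
      rw [this, hzr x.1]
      field_simp
      nlinarith [hrqR]
    · intro y
      rw [Fintype.sum_prod_type]
      simp only [Finset.sum_const, Finset.card_univ, Fintype.card_fin, nsmul_eq_mul]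
      have : ∑ i, (a:ℝ) * (z i y.1 / ((a:ℝ) * b)) = ((a:ℝ) / ((a:ℝ)*b)) * ∑ i, z i y.1 := by
        rw [Finset.mul_sum]; exact Finset.sum_congr rfl fun j _ => by ring
      rw [this, hzc y.1]
      field_simp
      nlinarith [hsqR]
    · unfold planCost
      rw [Fintype.sum_prod_type]
      simp only [Fintype.sum_prod_type, Finset.sum_const, Finset.card_univ, Fintype.card_fin,
        nsmul_eq_mul]
      have : ∀ i : Fin r, ∑ j, (b:ℝ) * (w i j * (z i j / ((a:ℝ)*b)))
          = (1/(a:ℝ)) * ∑ j, w i j * z i j := by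
        intro i
        rw [Finset.mul_sum]
        refine Finset.sum_congr rfl fun j _ => ?_
        field_simp
      simp only [this]
      rw [← Finset.mul_sum, ← Finset.mul_sum]
      field_simp
  have part2 : ∀ zhat : Fin r × Fin a → Fin s × Fin b → ℝ,
      IsPlan (fun _ : Fin r × Fin a => 1 / (q : ℝ))
          (fun _ : Fin s × Fin b => 1 / (q : ℝ)) zhat →
        IsPlan (fun _ => 1 / (r : ℝ)) (fun _ => 1 / (s : ℝ))
            (fun i j => ∑ k : Fin a, ∑ ℓ : Fin b, zhat (i, k) (j, ℓ)) ∧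
          planCost w (fun i j => ∑ k : Fin a, ∑ ℓ : Fin b, zhat (i, k) (j, ℓ)) =
            planCost (fun (x : Fin r × Fin a) (y : Fin s × Fin b) => w x.1 y.1) zhat := by
    intro zhat hz
    obtain ⟨hz0, hzr, hzc⟩ := hz
    refine ⟨⟨fun i j => Finset.sum_nonneg fun k _ => Finset.sum_nonneg fun l _ => hz0 _ _,
      ?_, ?_⟩, ?_⟩
    · intro i
      have : ∑ j, ∑ k : Fin a, ∑ ℓ : Fin b, zhat (i, k) (j, ℓ)
          = ∑ k : Fin a, ∑ y : Fin s × Fin b, zhat (i, k) y := by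
        rw [Finset.sum_comm]
        refine Finset.sum_congr rfl fun k _ => ?_
        rw [Fintype.sum_prod_type]
      rw [this]
      simp only [hzr]
      simp only [Finset.sum_const, Finset.card_univ, Fintype.card_fin, nsmul_eq_mul]
      field_simp
      nlinarith [hrqR]
    · intro j
      have e1 : ∑ i, ∑ k : Fin a, ∑ ℓ : Fin b, zhat (i, k) (j, ℓ)
          = ∑ ℓ : Fin b, ∑ i : Fin r, ∑ k : Fin a, zhat (i, k) (j, ℓ) := by
        rw [show (∑ i, ∑ k : Fin a, ∑ ℓ : Fin b, zhat (i, k) (j, ℓ))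
            = ∑ i, ∑ ℓ : Fin b, ∑ k : Fin a, zhat (i, k) (j, ℓ) from
          Finset.sum_congr rfl fun i _ => Finset.sum_comm]
        exact Finset.sum_comm
      have e2 : ∀ ℓ : Fin b, ∑ i : Fin r, ∑ k : Fin a, zhat (i, k) (j, ℓ) = 1 / (q:ℝ) := by
        intro ℓ
        have := hzc (j, ℓ)
        rw [Fintype.sum_prod_type] at this
        exact this
      rw [e1]
      simp only [e2]
      simp only [Finset.sum_const, Finset.card_univ, Fintype.card_fin, nsmul_eq_mul]
      field_simp
      nlinarith [hsqR]
    · unfold planCost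
      rw [Fintype.sum_prod_type]
      refine Finset.sum_congr rfl fun i _ => ?_
      simp only [Fintype.sum_prod_type, Finset.mul_sum]
      exact Finset.sum_comm
  refine ⟨part1, part2, ?_⟩
  unfold EMD
  congr 1
  ext t
  constructor
  · rintro ⟨z, hz, rfl⟩
    exact ⟨_, (part1 z hz).1, (part1 z hz).2⟩
  · rintro ⟨zhat, hz, rfl⟩
    exact ⟨_, (part2 zhat hz).1, (part2 zhat hz).2⟩
end

section
/- Let q be a positive integer and c : Fin q × Fin q → ℝ≥0 any cost function. Then there exists a transport plan z between the uniform probability weights on Fin q and on Fin q (each mass 1/q) achieving the minimum cost EMD(c, unif, unif), all of whose values lie in {0, 1/q}, and such that the set {(x,y) : z(x,y) = 1/q} is the graph of a permutation σ of Fin q. Moreover, this σ minimizes ∑_i c(i, σ(i)) over all permutations of Fin q, and EMD(c, unif, unif) = (1/q)·min_{σ ∈ Perm(Fin q)} ∑_i c(i, σ(i)). -/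
open Finset

lemma cost_perm (q : ℕ) (c : Fin q → Fin q → ℝ) (σ : Equiv.Perm (Fin q)) :
    ∑ x, ∑ y, c x y * (σ.permMatrix ℝ) x y = ∑ i, c i (σ i) := by
  refine Finset.sum_congr rfl fun x _ => ?_
  rw [Finset.sum_eq_single (σ x)] <;>
    simp (config := {contextual := true}) [Equiv.Perm.permMatrix, PEquiv.toMatrix_apply,
      Equiv.toPEquiv_apply, eq_comm]

lemma plan_lower (q : ℕ) (hq : 0 < q) (c : Fin q → Fin q → ℝ) (B : ℝ)
    (hB : ∀ τ : Equiv.Perm (Fin q), B ≤ ∑ i, c i (τ i))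
    (z : Fin q → Fin q → ℝ)
    (hz : IsPlan (fun _ => 1 / (q : ℝ)) (fun _ => 1 / (q : ℝ)) z) :
    (1 / (q : ℝ)) * B ≤ planCost c z := by
  have hq' : (0 : ℝ) < q := by exact_mod_cast hq
  set M : Matrix (Fin q) (Fin q) ℝ := Matrix.of (fun i j => q * z i j) with hM
  have hMds : M ∈ doublyStochastic ℝ (Fin q) := by
    rw [mem_doublyStochastic_iff_sum]
    refine ⟨fun i j => mul_nonneg hq'.le (hz.1 i j), fun i => ?_, fun j => ?_⟩
    · simp only [hM, Matrix.of_apply]; rw [← Finset.mul_sum, hz.2.1 i]; field_simp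
    · simp only [hM, Matrix.of_apply]; rw [← Finset.mul_sum, hz.2.2 j]; field_simp
  obtain ⟨w, hw1, hw2, hw3⟩ := exists_eq_sum_perm_of_mem_doublyStochastic hMds
  have key : B ≤ ∑ x, ∑ y, c x y * M x y := by
    calc B = ∑ σ : Equiv.Perm (Fin q), w σ * B := by rw [← Finset.sum_mul, hw2, one_mul]
    _ ≤ ∑ σ : Equiv.Perm (Fin q), w σ * ∑ i, c i (σ i) := by
        exact Finset.sum_le_sum fun σ _ => mul_le_mul_of_nonneg_left (hB σ) (hw1 σ)
    _ = ∑ x, ∑ y, c x y * M x y := by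
        rw [← hw3]
        simp only [← cost_perm q c, Finset.mul_sum, Matrix.sum_apply, Matrix.smul_apply,
          smul_eq_mul, Finset.mul_sum]
        rw [Finset.sum_comm]
        refine Finset.sum_congr rfl fun x _ => ?_
        rw [Finset.sum_comm]
        refine Finset.sum_congr rfl fun y _ => ?_
        exact Finset.sum_congr rfl fun τ _ => by ring
  have : planCost c z = (1 / (q : ℝ)) * ∑ x, ∑ y, c x y * M x y := by
    unfold planCost
    simp only [hM, Matrix.of_apply, Finset.mul_sum]
    refine Finset.sum_congr rfl fun x _ => Finset.sum_congr rfl fun y _ => ?_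
    field_simp
  rw [this]
  exact mul_le_mul_of_nonneg_left key (by positivity)

/-- between uniform distributions on `Fin q` there is an optimal transport
plan all of whose values are `0` or `1/q`, whose support is the graph of a permutation
`σ` minimizing `∑ i, c i (σ i)`; moreover the EMD equals `(1/q)` times this minimum
matching cost. -/
theorem stmt1 (q : ℕ) (hq : 0 < q) (c : Fin q → Fin q → ℝ) (hc : ∀ i j, 0 ≤ c i j) :
    ∃ (z : Fin q → Fin q → ℝ) (σ : Equiv.Perm (Fin q)),
      IsPlan (fun _ => 1 / (q : ℝ)) (fun _ => 1 / (q : ℝ)) z ∧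
      planCost c z = EMD c (fun _ => 1 / (q : ℝ)) (fun _ => 1 / (q : ℝ)) ∧
      (∀ x y, z x y = 0 ∨ z x y = 1 / (q : ℝ)) ∧
      (∀ x y, z x y = 1 / (q : ℝ) ↔ σ x = y) ∧
      (∀ τ : Equiv.Perm (Fin q), ∑ i, c i (σ i) ≤ ∑ i, c i (τ i)) ∧
      EMD c (fun _ => 1 / (q : ℝ)) (fun _ => 1 / (q : ℝ)) =
        (1 / (q : ℝ)) * ∑ i, c i (σ i) := by
  have hq' : (0 : ℝ) < q := by exact_mod_cast hq
  -- minimizing permutation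
  obtain ⟨σ, -, hσ⟩ := Finset.exists_min_image Finset.univ
    (fun τ : Equiv.Perm (Fin q) => ∑ i, c i (τ i)) ⟨1, Finset.mem_univ 1⟩
  have hσ' : ∀ τ : Equiv.Perm (Fin q), ∑ i, c i (σ i) ≤ ∑ i, c i (τ i) :=
    fun τ => hσ τ (Finset.mem_univ τ)
  set z : Fin q → Fin q → ℝ := fun x y => if σ x = y then 1 / (q : ℝ) else 0 with hzdef
  have hplan : IsPlan (fun _ => 1 / (q : ℝ)) (fun _ => 1 / (q : ℝ)) z := by
    refine ⟨fun x y => by by_cases h : σ x = y <;> simp [hzdef, h] <;> positivity, fun x => ?_, fun y => ?_⟩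
    · simp [hzdef]
    · simp only [hzdef]
      rw [Finset.sum_eq_single (σ.symm y)
        (fun b _ hb => if_neg (fun h => hb (by simp [← h]))) (by simp)]
      simp
  have hcost : planCost c z = (1 / (q : ℝ)) * ∑ i, c i (σ i) := by
    unfold planCost
    rw [Finset.mul_sum]
    refine Finset.sum_congr rfl fun x _ => ?_
    rw [Finset.sum_eq_single (σ x) (fun b _ hb => by simp [hzdef, Ne.symm hb]) (by simp)]
    simp [hzdef, mul_comm]
  have hmem : planCost c z ∈
      {t | ∃ z', IsPlan (fun _ => 1 / (q : ℝ)) (fun _ => 1 / (q : ℝ)) z' ∧ planCost c z' = t} :=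
    ⟨z, hplan, rfl⟩
  have hEMD : EMD c (fun _ => 1 / (q : ℝ)) (fun _ => 1 / (q : ℝ))
      = (1 / (q : ℝ)) * ∑ i, c i (σ i) := by
    apply le_antisymm
    · refine le_trans (csInf_le ?_ hmem) (le_of_eq hcost)
      refine ⟨(1 / (q : ℝ)) * ∑ i, c i (σ i), ?_⟩
      rintro t ⟨z', hz', rfl⟩
      exact plan_lower q hq c _ hσ' z' hz'
    · refine le_csInf ⟨_, hmem⟩ ?_
      rintro t ⟨z', hz', rfl⟩
      exact plan_lower q hq c _ hσ' z' hz'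
  refine ⟨z, σ, hplan, by rw [hcost, hEMD], ?_, ?_, hσ', hEMD⟩
  · intro x y; by_cases h : σ x = y <;> simp [hzdef, h]
  · intro x y
    constructor
    · intro h
      by_contra hne
      simp [hzdef, hne] at h
      exact absurd h.symm (by positivity)
    · intro h; simp [hzdef, h]
end

section
/- EMD(w, unif_{Fin r}, unif_{Fin s}) = (1/q) · min over all bijections σ : Fin r × Fin a → Fin s × Fin b of ∑_{x} ŵ(x, σ(x)). That is, the earth mover's distance between the uniform distributions equals (1/q) times the minimum cost of a perfect matching of the blown-up complete bipartite graph. -/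
open Finset

/-- `EMD(w, unif_{Fin r}, unif_{Fin s})` equals `(1/q)` times the minimum,
over bijections `σ : Fin r × Fin a ≃ Fin s × Fin b`, of the cost `∑ x, ŵ(x, σ x)` of the
corresponding perfect matching of the blown-up complete bipartite graph,
where `ŵ((i,k),(j,ℓ)) = w(i,j)`. -/
theorem stmt2 (r s : ℕ) (hr : 0 < r) (hs : 0 < s) (hrs : r ≤ s)
    (q a b : ℕ) (hq : q = Nat.lcm r s) (ha : a = q / r) (hb : b = q / s)
    (w : Fin r → Fin s → ℝ) (hw : ∀ i j, 0 ≤ w i j) :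
    ∃ σ : Fin r × Fin a ≃ Fin s × Fin b,
      (∀ τ : Fin r × Fin a ≃ Fin s × Fin b,
        ∑ x : Fin r × Fin a, w x.1 (σ x).1 ≤ ∑ x : Fin r × Fin a, w x.1 (τ x).1) ∧
      EMD w (fun _ => 1 / (r : ℝ)) (fun _ => 1 / (s : ℝ)) =
        (1 / (q : ℝ)) * ∑ x : Fin r × Fin a, w x.1 (σ x).1 := by
  -- basic arithmetic facts
  have hrq : r ∣ q := hq ▸ Nat.dvd_lcm_left r s
  have hsq : s ∣ q := hq ▸ Nat.dvd_lcm_right r s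
  have hq0 : 0 < q := hq ▸ Nat.pos_of_ne_zero (Nat.lcm_ne_zero hr.ne' hs.ne')
  have hra : r * a = q := by rw [ha, Nat.mul_div_cancel' hrq]
  have hsb : s * b = q := by rw [hb, Nat.mul_div_cancel' hsq]
  have ha0 : 0 < a := by rcases Nat.eq_zero_or_pos a with h | h; · simp [h] at hra; omega
                         · exact h
  have hb0 : 0 < b := by rcases Nat.eq_zero_or_pos b with h | h; · simp [h] at hsb; omega
                         · exact h
  have hqR : (q : ℝ) ≠ 0 := Nat.cast_ne_zero.2 hq0.ne'
  have hrR : (r : ℝ) ≠ 0 := Nat.cast_ne_zero.2 hr.ne'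
  have hsR : (s : ℝ) ≠ 0 := Nat.cast_ne_zero.2 hs.ne'
  have haR : (a : ℝ) ≠ 0 := Nat.cast_ne_zero.2 ha0.ne'
  have hbR : (b : ℝ) ≠ 0 := Nat.cast_ne_zero.2 hb0.ne'
  have hraR : (r : ℝ) * a = q := by exact_mod_cast congrArg Nat.cast hra
  have hsbR : (s : ℝ) * b = q := by exact_mod_cast congrArg Nat.cast hsb
  -- a fixed equivalence between the two blown-up index sets
  have hcard : Fintype.card (Fin s × Fin b) = Fintype.card (Fin r × Fin a) := by
    simp [hra, hsb]
  let e : Fin s × Fin b ≃ Fin r × Fin a := Fintype.equivOfCardEq hcard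
  haveI : Nonempty (Fin r × Fin a ≃ Fin s × Fin b) := ⟨e.symm⟩
  -- the minimizing bijection
  obtain ⟨σ₀, hσ₀⟩ := Finite.exists_min
    (fun σ : Fin r × Fin a ≃ Fin s × Fin b => ∑ x : Fin r × Fin a, w x.1 (σ x).1)
  set M : ℝ := ∑ x : Fin r × Fin a, w x.1 (σ₀ x).1 with hM
  refine ⟨σ₀, hσ₀, ?_⟩
  -- the plan induced by σ₀
  set z : Fin r → Fin s → ℝ :=
    fun i j => (1 / q) * ∑ k : Fin a, if (σ₀ (i, k)).1 = j then 1 else 0 with hz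
  have hplan : IsPlan (fun _ : Fin r => 1 / (r : ℝ)) (fun _ : Fin s => 1 / (s : ℝ)) z := by
    refine ⟨fun i j => ?_, fun i => ?_, fun j => ?_⟩
    · apply mul_nonneg (by positivity)
      apply Finset.sum_nonneg; intro k _; split <;> norm_num
    · simp only [hz, ← Finset.mul_sum]
      rw [Finset.sum_comm]
      have h1 : ∀ k : Fin a, ∑ j : Fin s, (if (σ₀ (i, k)).1 = j then (1:ℝ) else 0) = 1 := by
        intro k; simp
      rw [Finset.sum_congr rfl fun k _ => h1 k]
      simp only [Finset.sum_const, Finset.card_univ, Fintype.card_fin, nsmul_eq_mul, mul_one]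
      field_simp
      linarith [hraR]
    · simp only [hz, ← Finset.sum_mul]
      rw [show ∑ i : Fin r, (1 / (q:ℝ)) * ∑ k : Fin a, (if (σ₀ (i, k)).1 = j then (1:ℝ) else 0)
          = (1 / (q:ℝ)) * ∑ x : Fin r × Fin a, (if (σ₀ x).1 = j then (1:ℝ) else 0) by
        rw [Fintype.sum_prod_type, Finset.mul_sum]]
      rw [Fintype.sum_equiv σ₀ _ (fun y => if y.1 = j then (1:ℝ) else 0) (fun x => rfl)]
      rw [Fintype.sum_prod_type]
      have h2 : (∑ x : Fin s, ∑ _k : Fin b, if x = j then (1:ℝ) else 0) = b := by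
        simp [Finset.sum_ite_eq']
      rw [h2]
      field_simp
      linarith [hsbR]
  have hcost : planCost w z = (1 / q) * M := by
    simp only [planCost, hz, hM]
    rw [Fintype.sum_prod_type, Finset.mul_sum]
    refine Finset.sum_congr rfl fun i _ => ?_
    simp only [Finset.mul_sum, mul_ite, mul_one, mul_zero]
    rw [Finset.sum_comm]
    refine Finset.sum_congr rfl fun k _ => ?_
    rw [Finset.sum_ite_eq Finset.univ (σ₀ (i,k)).1 (fun j => w i j * (1/(q:ℝ)))]
    simp [mul_comm]
  -- Lower bound: every plan costs at least (1/q) * M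
  have hqpos : (0:ℝ) < q := Nat.cast_pos.2 hq0
  have hlb : ∀ z' : Fin r → Fin s → ℝ,
      IsPlan (fun _ : Fin r => 1 / (r : ℝ)) (fun _ : Fin s => 1 / (s : ℝ)) z' →
      (1 / q) * M ≤ planCost w z' := by
    rintro z' ⟨hz1, hz2, hz3⟩
    set c : ℝ := q / (a * b) with hc
    have hcpos : 0 ≤ c := by positivity
    set Z : Matrix (Fin r × Fin a) (Fin r × Fin a) ℝ :=
      fun x y => c * z' x.1 (e.symm y).1 with hZ
    set W : Fin r × Fin a → Fin r × Fin a → ℝ := fun x y => w x.1 (e.symm y).1 with hW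
    -- Z is doubly stochastic
    have hZds : Z ∈ doublyStochastic ℝ (Fin r × Fin a) := by
      rw [mem_doublyStochastic_iff_sum]
      refine ⟨fun x y => mul_nonneg hcpos (hz1 _ _), fun x => ?_, fun y => ?_⟩
      · rw [show (∑ y : Fin r × Fin a, Z x y)
            = ∑ y' : Fin s × Fin b, c * z' x.1 y'.1 from
          (Fintype.sum_equiv e (fun y' => c * z' x.1 y'.1) (fun y => Z x y)
            (fun y' => by simp [hZ])).symm]
        rw [Fintype.sum_prod_type]
        simp only [Finset.sum_const, Finset.card_univ, Fintype.card_fin, nsmul_eq_mul]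
        rw [← Finset.mul_sum, ← Finset.mul_sum, hz2]
        rw [hc]
        field_simp
        rw [← hraR]; ring
      · rw [Fintype.sum_prod_type]
        simp only [hZ]
        simp only [Finset.sum_const, Finset.card_univ, Fintype.card_fin, nsmul_eq_mul]
        rw [← Finset.mul_sum, ← Finset.mul_sum, hz3]
        rw [hc]
        field_simp
        rw [← hsbR]; ring
    obtain ⟨cw, hcw0, hcw1, hcwM⟩ := exists_eq_sum_perm_of_mem_doublyStochastic hZds
    -- cost of a permutation matrix
    have hperm : ∀ π : Equiv.Perm (Fin r × Fin a),
        (∑ x, ∑ y, W x y * (π.permMatrix ℝ) x y) = ∑ x, W x (π x) := by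
      intro π
      refine Finset.sum_congr rfl fun x _ => ?_
      simp [Equiv.Perm.permMatrix, PEquiv.toMatrix_apply, Equiv.toPEquiv_apply,
        mul_ite, mul_one, mul_zero, Finset.sum_ite_eq]
    -- decompose the cost of Z
    have hFZ : (∑ x, ∑ y, W x y * Z x y)
        = ∑ π : Equiv.Perm (Fin r × Fin a), cw π * ∑ x, W x (π x) := by
      rw [← hcwM]
      have h2 : ∀ x y : Fin r × Fin a,
          W x y * (∑ π : Equiv.Perm (Fin r × Fin a), cw π • π.permMatrix ℝ) x y
          = ∑ π : Equiv.Perm (Fin r × Fin a), cw π * (W x y * (π.permMatrix ℝ) x y) := by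
        intro x y
        simp only [Matrix.sum_apply, Matrix.smul_apply, smul_eq_mul, Finset.mul_sum]
        exact Finset.sum_congr rfl fun π _ => by ring
      simp only [h2]
      have h3 : ∀ x : Fin r × Fin a,
          (∑ y : Fin r × Fin a, ∑ π : Equiv.Perm (Fin r × Fin a),
            cw π * (W x y * (π.permMatrix ℝ) x y))
          = ∑ π : Equiv.Perm (Fin r × Fin a), ∑ y : Fin r × Fin a,
            cw π * (W x y * (π.permMatrix ℝ) x y) := fun x => Finset.sum_comm
      simp only [h3]
      rw [Finset.sum_comm]
      refine Finset.sum_congr rfl fun π _ => ?_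
      rw [← hperm π, Finset.mul_sum]
      exact Finset.sum_congr rfl fun x _ => (Finset.mul_sum _ _ _).symm
    -- the cost of Z is at least M
    have hZgeM : M ≤ ∑ x, ∑ y, W x y * Z x y := by
      rw [hFZ]
      calc M = ∑ π : Equiv.Perm (Fin r × Fin a), cw π * M := by
              rw [← Finset.sum_mul, hcw1, one_mul]
        _ ≤ ∑ π : Equiv.Perm (Fin r × Fin a), cw π * ∑ x, W x (π x) := by
              refine Finset.sum_le_sum fun π _ => ?_
              refine mul_le_mul_of_nonneg_left ?_ (hcw0 π)
              exact hσ₀ (π.trans e.symm)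
    -- the cost of Z equals q times the plan cost
    have hFZcost : (∑ x, ∑ y, W x y * Z x y) = q * planCost w z' := by
      have h1 : ∀ x : Fin r × Fin a, (∑ y : Fin r × Fin a, W x y * Z x y)
          = (c * b) * ∑ j : Fin s, w x.1 j * z' x.1 j := by
        intro x
        rw [show (∑ y : Fin r × Fin a, W x y * Z x y)
            = ∑ y' : Fin s × Fin b, w x.1 y'.1 * (c * z' x.1 y'.1) from
          (Fintype.sum_equiv e (fun y' => w x.1 y'.1 * (c * z' x.1 y'.1))
            (fun y => W x y * Z x y) (fun y' => by simp [hZ, hW])).symm]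
        rw [Fintype.sum_prod_type]
        simp only [Finset.sum_const, Finset.card_univ, Fintype.card_fin, nsmul_eq_mul]
        rw [Finset.mul_sum]
        refine Finset.sum_congr rfl fun j _ => by ring
      rw [Finset.sum_congr rfl fun x _ => h1 x, Fintype.sum_prod_type]
      simp only [Finset.sum_const, Finset.card_univ, Fintype.card_fin, nsmul_eq_mul]
      have habc : (a:ℝ) * c * b = q := by rw [hc]; field_simp
      rw [planCost, Finset.mul_sum]
      refine Finset.sum_congr rfl fun i _ => ?_
      rw [← mul_assoc, ← mul_assoc, habc]
    -- conclude
    rw [hFZcost] at hZgeM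
    rw [one_div, inv_mul_le_iff₀ hqpos]
    exact hZgeM
  -- assemble the equality
  rw [EMD]
  apply le_antisymm
  · refine csInf_le ⟨0, ?_⟩ ⟨z, hplan, hcost⟩
    rintro t ⟨z', hz', rfl⟩
    exact Finset.sum_nonneg fun i _ => Finset.sum_nonneg fun j _ =>
      mul_nonneg (hw i j) (hz'.1 i j)
  · refine le_csInf ⟨(1 / q) * M, z, hplan, hcost⟩ ?_
    rintro t ⟨z', hz', rfl⟩
    exact hlb z' hz'
end

section
/- Let q = lcm(deg_G(u)+1, deg_G(v)+1). Then q·EMD_G(u,v) is a nonnegative integer δ with 0 ≤ δ < 3q, and consequently Ric_G(e) = (q − δ)/q. -/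
open Finset
open scoped Classical

variable {V : Type*}

/-- The open neighborhood of `u` in `G`, as a finset. -/
noncomputable def nbrF [Fintype V] (G : SimpleGraph V) (u : V) : Finset V :=
  Finset.univ.filter fun x => G.Adj u x

/-- The degree of `u` in `G`. -/
noncomputable def degG [Fintype V] (G : SimpleGraph V) (u : V) : ℕ := (nbrF G u).card

/-- The closed neighborhood `N[u]` of `u` in `G`. -/
noncomputable def cnbr [Fintype V] (G : SimpleGraph V) (u : V) : Finset V :=
  insert u (nbrF G u)

/-- A transport plan for `(G,u,v)`: nonnegative, with row sums `1/(deg u + 1)` over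
`N[u]` and column sums `1/(deg v + 1)` over `N[v]`. -/
def IsPlanG [Fintype V] (G : SimpleGraph V) (u v : V) (z : V → V → ℝ) : Prop :=
  (∀ x y, 0 ≤ z x y) ∧
  (∀ x ∈ cnbr G u, ∑ y ∈ cnbr G v, z x y = 1 / ((degG G u : ℝ) + 1)) ∧
  (∀ y ∈ cnbr G v, ∑ x ∈ cnbr G u, z x y = 1 / ((degG G v : ℝ) + 1))

/-- The cost of a transport plan, with respect to shortest-path distance in `G`. -/
noncomputable def planCostG [Fintype V] (G : SimpleGraph V) (u v : V) (z : V → V → ℝ) : ℝ :=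
  ∑ x ∈ cnbr G u, ∑ y ∈ cnbr G v, (G.dist x y : ℝ) * z x y

/-- The earth mover's distance `EMD_G(u,v)`: the minimum cost of a transport plan. -/
noncomputable def EMDG [Fintype V] (G : SimpleGraph V) (u v : V) : ℝ :=
  sInf {t | ∃ z, IsPlanG G u v z ∧ planCostG G u v z = t}

/-- The Ollivier–Ricci curvature of the edge `{u,v}`. -/
noncomputable def RicG [Fintype V] (G : SimpleGraph V) (u v : V) : ℝ :=
  1 - EMDG G u v

/-! ### Auxiliary material -/

/-- Replication map: spreads `Fin (n*k)` over a finset `s` of cardinality `n`,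
with each element hit exactly `k` times. -/
noncomputable def repMap (s : Finset V) {n : ℕ} (h : s.card = n) (k : ℕ) : Fin (n * k) → V :=
  fun i => ((Finset.equivFinOfCardEq h).symm (finProdFinEquiv.symm i).1 : V)

lemma repMap_mem (s : Finset V) {n : ℕ} (h : s.card = n) (k : ℕ) (i : Fin (n * k)) :
    repMap s h k i ∈ s := Finset.coe_mem _

lemma sum_repMap (s : Finset V) {n : ℕ} (h : s.card = n) (k : ℕ) (f : V → ℝ) :
    ∑ i, f (repMap s h k i) = (k : ℝ) * ∑ x ∈ s, f x := by
  rw [← Fintype.sum_equiv finProdFinEquiv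
    (fun p : Fin n × Fin k => f ((Finset.equivFinOfCardEq h).symm p.1 : V)) _
    (fun p => by simp [repMap])]
  rw [Fintype.sum_prod_type]
  simp only [Finset.sum_const, Finset.card_univ, Fintype.card_fin, nsmul_eq_mul]
  rw [← Finset.mul_sum]
  congr 1
  rw [← Finset.sum_coe_sort s f]
  exact (Fintype.sum_equiv (Finset.equivFinOfCardEq h) _ _ (by simp)).symm

lemma card_cnbr [Fintype V] (G : SimpleGraph V) (u : V) :
    (cnbr G u).card = degG G u + 1 := by
  unfold cnbr degG
  rw [Finset.card_insert_of_notMem (by simp [nbrF])]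

lemma dist_le_three [Fintype V] (G : SimpleGraph V) {u v x y : V} (huv : G.Adj u v)
    (hx : x ∈ cnbr G u) (hy : y ∈ cnbr G v) : G.dist x y ≤ 3 := by
  have hx' : x = u ∨ G.Adj u x := by simpa [cnbr, nbrF] using hx
  have hy' : y = v ∨ G.Adj v y := by simpa [cnbr, nbrF] using hy
  have base : ∀ (w : G.Walk x y), w.length ≤ 3 → G.dist x y ≤ 3 :=
    fun w hw => (SimpleGraph.dist_le w).trans hw
  rcases hx' with rfl | hxu <;> rcases hy' with rfl | hvy
  · exact base (.cons huv .nil) (by simp)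
  · exact base (.cons huv (.cons hvy .nil)) (by simp)
  · exact base (.cons hxu.symm (.cons huv .nil)) (by simp)
  · exact base (.cons hxu.symm (.cons huv (.cons hvy .nil))) (by simp)

lemma permMatrix_entry (q : ℕ) (σ : Equiv.Perm (Fin q)) (i j : Fin q) :
    (σ.permMatrix ℝ) i j = if σ i = j then 1 else 0 := by
  simp [Equiv.Perm.permMatrix, PEquiv.toMatrix_apply, Equiv.toPEquiv_apply, eq_comm]

/-- with `q = lcm(deg u + 1, deg v + 1)`, the quantity `q·EMD_G(u,v)` is a
nonnegative integer `δ < 3q`, and `Ric_G(e) = (q - δ)/q`. -/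
theorem stmt3 [Fintype V] (G : SimpleGraph V) (u v : V) (huv : G.Adj u v)
    (hdeg : degG G u ≤ degG G v)
    (q : ℕ) (hq : q = Nat.lcm (degG G u + 1) (degG G v + 1)) :
    ∃ δ : ℕ, (q : ℝ) * EMDG G u v = (δ : ℝ) ∧ δ < 3 * q ∧
      RicG G u v = ((q : ℝ) - (δ : ℝ)) / (q : ℝ) := by
  classical
  have ha : (cnbr G u).card = degG G u + 1 := card_cnbr G u
  have hb : (cnbr G v).card = degG G v + 1 := card_cnbr G v
  have hqpos : 0 < q := hq ▸ Nat.lcm_pos (Nat.succ_pos _) (Nat.succ_pos _)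
  obtain ⟨k1, hk1⟩ : (degG G u + 1) ∣ q := hq ▸ Nat.dvd_lcm_left _ _
  obtain ⟨k2, hk2⟩ : (degG G v + 1) ∣ q := hq ▸ Nat.dvd_lcm_right _ _
  have hqR : (0:ℝ) < q := by exact_mod_cast hqpos
  have haR : (0:ℝ) < (degG G u : ℝ) + 1 := by positivity
  have hbR : (0:ℝ) < (degG G v : ℝ) + 1 := by positivity
  have hk1R : (q:ℝ) = ((degG G u : ℝ) + 1) * (k1:ℝ) := by exact_mod_cast hk1
  have hk2R : (q:ℝ) = ((degG G v : ℝ) + 1) * (k2:ℝ) := by exact_mod_cast hk2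
  have hk1Rpos : (0:ℝ) < (k1:ℝ) := by nlinarith
  have hk2Rpos : (0:ℝ) < (k2:ℝ) := by nlinarith
  -- the replication maps
  set r : Fin q → V := fun i => repMap (cnbr G u) ha k1 (finCongr hk1 i) with hr_def
  set c : Fin q → V := fun j => repMap (cnbr G v) hb k2 (finCongr hk2 j) with hc_def
  have hr : ∀ i, r i ∈ cnbr G u := fun i => repMap_mem _ _ _ _
  have hc : ∀ j, c j ∈ cnbr G v := fun j => repMap_mem _ _ _ _
  have hrsum : ∀ f : V → ℝ, ∑ i, f (r i) = (k1:ℝ) * ∑ x ∈ cnbr G u, f x := fun f => by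
    rw [show (∑ i, f (r i)) = ∑ j, f (repMap (cnbr G u) ha k1 j) from
      Fintype.sum_equiv (finCongr hk1) _ _ (fun i => rfl)]
    exact sum_repMap _ _ _ f
  have hcsum : ∀ f : V → ℝ, ∑ j, f (c j) = (k2:ℝ) * ∑ y ∈ cnbr G v, f y := fun f => by
    rw [show (∑ j, f (c j)) = ∑ j, f (repMap (cnbr G v) hb k2 j) from
      Fintype.sum_equiv (finCongr hk2) _ _ (fun i => rfl)]
    exact sum_repMap _ _ _ f
  -- the finite optimum over permutations
  set F : Equiv.Perm (Fin q) → ℕ := fun σ => ∑ i, G.dist (r i) (c (σ i)) with hF_def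
  have hTne : (Finset.image F Finset.univ).Nonempty :=
    ⟨F 1, Finset.mem_image_of_mem _ (Finset.mem_univ 1)⟩
  set δ : ℕ := (Finset.image F Finset.univ).min' hTne with hδ_def
  obtain ⟨σ0, -, hσ0⟩ : ∃ σ ∈ Finset.univ, F σ = δ :=
    Finset.mem_image.1 ((Finset.image F Finset.univ).min'_mem hTne)
  have hδle : ∀ σ, δ ≤ F σ := fun σ =>
    Finset.min'_le _ _ (Finset.mem_image_of_mem _ (Finset.mem_univ σ))
  have hFcast : ∀ σ, (F σ : ℝ) = ∑ i, (G.dist (r i) (c (σ i)) : ℝ) := fun σ => by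
    rw [hF_def]; push_cast; rfl
  -- Claim A : every permutation yields a plan of cost `F σ / q`.
  have planA : ∀ σ : Equiv.Perm (Fin q), ∃ z, IsPlanG G u v z ∧
      planCostG G u v z = (F σ : ℝ) / q := by
    intro σ
    set z : V → V → ℝ := fun x y =>
      (∑ i : Fin q, if r i = x ∧ c (σ i) = y then (1:ℝ) else 0) / q with hz_def
    have key : ∀ i : Fin q,
        (∑ x ∈ cnbr G u, ∑ y ∈ cnbr G v,
          (G.dist x y : ℝ) * (if r i = x ∧ c (σ i) = y then (1:ℝ) else 0))
          = (G.dist (r i) (c (σ i)) : ℝ) := by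
      intro i
      have inner : ∀ x ∈ cnbr G u,
          (∑ y ∈ cnbr G v, (G.dist x y : ℝ) * (if r i = x ∧ c (σ i) = y then (1:ℝ) else 0))
            = if r i = x then (G.dist x (c (σ i)) : ℝ) else 0 := by
        intro x hx
        by_cases hri : r i = x
        · simp only [hri, true_and, mul_ite, mul_one, mul_zero, if_true]
          rw [Finset.sum_ite_eq (cnbr G v) (c (σ i)) (fun y => (G.dist x y : ℝ))]
          simp [hc (σ i)]
        · simp [hri]
      rw [Finset.sum_congr rfl inner]
      rw [Finset.sum_ite_eq (cnbr G u) (r i) (fun x => (G.dist x (c (σ i)) : ℝ))]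
      simp [hr i]
    refine ⟨z, ⟨?_, ?_, ?_⟩, ?_⟩
    · intro x y
      apply div_nonneg _ hqR.le
      exact Finset.sum_nonneg fun i _ => by positivity
    · intro x hx
      have h1 : ∑ y ∈ cnbr G v, z x y
          = (∑ i : Fin q, if r i = x then (1:ℝ) else 0) / q := by
        rw [← Finset.sum_div]
        congr 1
        rw [Finset.sum_comm]
        refine Finset.sum_congr rfl fun i _ => ?_
        by_cases hri : r i = x
        · simp only [hri, true_and, if_true]
          rw [Finset.sum_ite_eq (cnbr G v) (c (σ i)) (fun _ => (1:ℝ))]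
          simp [hc (σ i)]
        · simp [hri]
      have h2 : (∑ i : Fin q, if r i = x then (1:ℝ) else 0) = (k1:ℝ) := by
        rw [hrsum (fun x' => if x' = x then (1:ℝ) else 0)]
        rw [Finset.sum_ite_eq' (cnbr G u) x (fun _ => (1:ℝ))]
        simp [hx]
      rw [h1, h2, hk1R]
      rw [mul_comm]
      rw [div_mul_eq_div_div]
      rw [div_self hk1Rpos.ne']
    · intro y hy
      have h1 : ∑ x ∈ cnbr G u, z x y
          = (∑ i : Fin q, if c (σ i) = y then (1:ℝ) else 0) / q := by
        rw [← Finset.sum_div]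
        congr 1
        rw [Finset.sum_comm]
        refine Finset.sum_congr rfl fun i _ => ?_
        by_cases hci : c (σ i) = y
        · simp only [hci, and_true, if_true]
          rw [Finset.sum_ite_eq (cnbr G u) (r i) (fun _ => (1:ℝ))]
          simp [hr i]
        · simp [hci]
      have h2 : (∑ i : Fin q, if c (σ i) = y then (1:ℝ) else 0) = (k2:ℝ) := by
        rw [show (∑ i : Fin q, if c (σ i) = y then (1:ℝ) else 0)
            = ∑ j : Fin q, if c j = y then (1:ℝ) else 0 from
          Fintype.sum_equiv σ _ _ (fun i => rfl)]
        rw [hcsum (fun y' => if y' = y then (1:ℝ) else 0)]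
        rw [Finset.sum_ite_eq' (cnbr G v) y (fun _ => (1:ℝ))]
        simp [hy]
      rw [h1, h2, hk2R]
      rw [mul_comm]
      rw [div_mul_eq_div_div]
      rw [div_self hk2Rpos.ne']
    · unfold planCostG
      have h1 : ∑ x ∈ cnbr G u, ∑ y ∈ cnbr G v, (G.dist x y : ℝ) * z x y
          = (∑ x ∈ cnbr G u, ∑ y ∈ cnbr G v,
              (G.dist x y : ℝ) * (∑ i : Fin q, if r i = x ∧ c (σ i) = y then (1:ℝ) else 0)) / q := by
        rw [Finset.sum_div]
        refine Finset.sum_congr rfl fun x hx => ?_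
        rw [Finset.sum_div]
        refine Finset.sum_congr rfl fun y hy => ?_
        rw [mul_div_assoc]
      rw [h1]
      congr 1
      calc ∑ x ∈ cnbr G u, ∑ y ∈ cnbr G v,
              (G.dist x y : ℝ) * (∑ i : Fin q, if r i = x ∧ c (σ i) = y then (1:ℝ) else 0)
          = ∑ x ∈ cnbr G u, ∑ y ∈ cnbr G v, ∑ i : Fin q,
              (G.dist x y : ℝ) * (if r i = x ∧ c (σ i) = y then (1:ℝ) else 0) := by
            refine Finset.sum_congr rfl fun x _ => Finset.sum_congr rfl fun y _ => ?_
            rw [Finset.mul_sum]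
        _ = ∑ x ∈ cnbr G u, ∑ i : Fin q, ∑ y ∈ cnbr G v,
              (G.dist x y : ℝ) * (if r i = x ∧ c (σ i) = y then (1:ℝ) else 0) := by
            exact Finset.sum_congr rfl fun x _ => Finset.sum_comm
        _ = ∑ i : Fin q, ∑ x ∈ cnbr G u, ∑ y ∈ cnbr G v,
              (G.dist x y : ℝ) * (if r i = x ∧ c (σ i) = y then (1:ℝ) else 0) :=
            Finset.sum_comm
        _ = ∑ i : Fin q, (G.dist (r i) (c (σ i)) : ℝ) :=
            Finset.sum_congr rfl fun i _ => key i
        _ = (F σ : ℝ) := (hFcast σ).symm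
  -- Claim B : every plan has cost at least `δ / q`.
  have planB : ∀ z, IsPlanG G u v z → (δ:ℝ)/q ≤ planCostG G u v z := by
    rintro z ⟨hz0, hzr, hzc⟩
    set s : ℝ := (((degG G u : ℝ) + 1) * ((degG G v : ℝ) + 1)) / q with hs_def
    have hs_pos : 0 < s := by positivity
    set M : Matrix (Fin q) (Fin q) ℝ := fun i j => z (r i) (c j) * s with hM_def
    have hMds : M ∈ doublyStochastic ℝ (Fin q) := by
      rw [mem_doublyStochastic_iff_sum]
      refine ⟨fun i j => mul_nonneg (hz0 _ _) hs_pos.le, fun i => ?_, fun j => ?_⟩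
      · have h1 : ∑ j, M i j = (k2:ℝ) * ∑ y ∈ cnbr G v, z (r i) y * s :=
          hcsum (fun y => z (r i) y * s)
        rw [h1, ← Finset.sum_mul, hzr (r i) (hr i), hs_def]
        field_simp
        rw [hk2R]; ring
      · have h1 : ∑ i, M i j = (k1:ℝ) * ∑ x ∈ cnbr G u, z x (c j) * s :=
          hrsum (fun x => z x (c j) * s)
        rw [h1, ← Finset.sum_mul, hzc (c j) (hc j), hs_def]
        field_simp
        rw [hk1R]; ring
    obtain ⟨w, hw0, hw1, hwM⟩ := exists_eq_sum_perm_of_mem_doublyStochastic hMds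
    -- evaluation 1 : the weighted cost equals `q * planCost`
    have hev1 : ∑ i, ∑ j, (G.dist (r i) (c j) : ℝ) * M i j = (q:ℝ) * planCostG G u v z := by
      have step1 : ∑ i, ∑ j, (G.dist (r i) (c j) : ℝ) * M i j
          = (k1:ℝ) * ∑ x ∈ cnbr G u, ∑ j, (G.dist x (c j) : ℝ) * (z x (c j) * s) :=
        hrsum (fun x => ∑ j, (G.dist x (c j) : ℝ) * (z x (c j) * s))
      have step2 : ∀ x, ∑ j, (G.dist x (c j) : ℝ) * (z x (c j) * s)
          = (k2:ℝ) * ∑ y ∈ cnbr G v, (G.dist x y : ℝ) * (z x y * s) := fun x =>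
        hcsum (fun y => (G.dist x y : ℝ) * (z x y * s))
      rw [step1, Finset.sum_congr rfl (fun x _ => step2 x)]
      unfold planCostG
      rw [← Finset.mul_sum]
      have : ∑ x ∈ cnbr G u, ∑ y ∈ cnbr G v, (G.dist x y : ℝ) * (z x y * s)
          = s * ∑ x ∈ cnbr G u, ∑ y ∈ cnbr G v, (G.dist x y : ℝ) * z x y := by
        rw [Finset.mul_sum]
        refine Finset.sum_congr rfl fun x _ => ?_
        rw [Finset.mul_sum]
        exact Finset.sum_congr rfl fun y _ => by ring
      rw [this]
      have hscale : (k1:ℝ) * ((k2:ℝ) * s) = (q:ℝ) := by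
        rw [hs_def]
        field_simp
        nlinarith [hk1R, hk2R]
      calc (k1:ℝ) * ((k2:ℝ) * (s * ∑ x ∈ cnbr G u, ∑ y ∈ cnbr G v, (G.dist x y : ℝ) * z x y))
          = ((k1:ℝ) * ((k2:ℝ) * s)) * ∑ x ∈ cnbr G u, ∑ y ∈ cnbr G v, (G.dist x y : ℝ) * z x y := by
            ring
        _ = (q:ℝ) * ∑ x ∈ cnbr G u, ∑ y ∈ cnbr G v, (G.dist x y : ℝ) * z x y := by
            rw [hscale]
    -- evaluation 2 : the weighted cost is a convex combination of the `F σ`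
    have hev2 : ∑ i, ∑ j, (G.dist (r i) (c j) : ℝ) * M i j = ∑ σ, w σ * (F σ : ℝ) := by
      rw [← hwM]
      have entry : ∀ i j : Fin q, ((∑ σ, w σ • σ.permMatrix ℝ) i j)
          = ∑ σ, w σ * (if σ i = j then 1 else 0) := by
        intro i j
        rw [Matrix.sum_apply, Finset.sum_congr rfl fun σ _ => ?_]
        rw [Matrix.smul_apply, permMatrix_entry, smul_eq_mul]
      calc ∑ i, ∑ j, (G.dist (r i) (c j) : ℝ) * ((∑ σ, w σ • σ.permMatrix ℝ) i j)
          = ∑ i, ∑ j, ∑ σ, w σ * ((G.dist (r i) (c j) : ℝ) * (if σ i = j then 1 else 0)) := by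
            refine Finset.sum_congr rfl fun i _ => Finset.sum_congr rfl fun j _ => ?_
            rw [entry i j, Finset.mul_sum]
            exact Finset.sum_congr rfl fun σ _ => by ring
        _ = ∑ σ, ∑ i, ∑ j, w σ * ((G.dist (r i) (c j) : ℝ) * (if σ i = j then 1 else 0)) :=
            (Finset.sum_congr rfl fun i _ => Finset.sum_comm).trans Finset.sum_comm
        _ = ∑ σ, ∑ i, w σ * (G.dist (r i) (c (σ i)) : ℝ) := by
            refine Finset.sum_congr rfl fun σ _ => Finset.sum_congr rfl fun i _ => ?_
            rw [← Finset.mul_sum]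
            congr 1
            rw [show (∑ j, (G.dist (r i) (c j) : ℝ) * (if σ i = j then 1 else 0))
                = ∑ j, if σ i = j then (G.dist (r i) (c j) : ℝ) else 0 from
              Finset.sum_congr rfl fun j _ => by rw [mul_ite, mul_one, mul_zero]]
            rw [Finset.sum_ite_eq Finset.univ (σ i) (fun j => (G.dist (r i) (c j) : ℝ))]
            simp
        _ = ∑ σ, w σ * (F σ : ℝ) := by
            refine Finset.sum_congr rfl fun σ _ => ?_
            rw [← Finset.mul_sum, hFcast σ]
    have hge : (δ:ℝ) ≤ (q:ℝ) * planCostG G u v z := by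
      rw [← hev1, hev2]
      calc (δ:ℝ) = ∑ σ, w σ * (δ:ℝ) := by rw [← Finset.sum_mul, hw1, one_mul]
        _ ≤ ∑ σ, w σ * (F σ : ℝ) := by
            refine Finset.sum_le_sum fun σ _ => ?_
            have h1 : (δ:ℝ) ≤ (F σ : ℝ) := by exact_mod_cast hδle σ
            exact mul_le_mul_of_nonneg_left h1 (hw0 σ)
    rw [div_le_iff₀ hqR]
    linarith [hge]
  -- the product plan has cost < 3
  have hprod : ∃ z, IsPlanG G u v z ∧ planCostG G u v z < 3 := by
    refine ⟨fun _ _ => 1 / (((degG G u : ℝ) + 1) * ((degG G v : ℝ) + 1)), ⟨?_, ?_, ?_⟩, ?_⟩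
    · intro x y; positivity
    · intro x hx
      rw [Finset.sum_const, hb, nsmul_eq_mul]
      push_cast
      field_simp
      try ring
    · intro y hy
      rw [Finset.sum_const, ha, nsmul_eq_mul]
      push_cast
      field_simp
      try ring
    · unfold planCostG
      have hbound : ∀ x ∈ cnbr G u,
          ∑ y ∈ cnbr G v, (G.dist x y : ℝ) ≤ 3 * ((degG G v : ℝ) + 1) := by
        intro x hx
        calc ∑ y ∈ cnbr G v, (G.dist x y : ℝ) ≤ ∑ y ∈ cnbr G v, (3:ℝ) :=
              Finset.sum_le_sum fun y hy => by
                exact_mod_cast dist_le_three G huv hx hy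
          _ = 3 * ((degG G v : ℝ) + 1) := by
              rw [Finset.sum_const, hb, nsmul_eq_mul]; push_cast; ring
      have hstrict : ∑ y ∈ cnbr G v, (G.dist u y : ℝ) < 3 * ((degG G v : ℝ) + 1) := by
        have h1 : ∑ y ∈ cnbr G v, (G.dist u y : ℝ) < ∑ y ∈ cnbr G v, (3:ℝ) := by
          refine Finset.sum_lt_sum (fun y hy => by
            exact_mod_cast dist_le_three G huv (Finset.mem_insert_self u _) hy) ?_
          refine ⟨v, Finset.mem_insert_self v _, ?_⟩
          have : G.dist u v = 1 := SimpleGraph.dist_eq_one_iff_adj.2 huv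
          rw [this]; norm_num
        calc ∑ y ∈ cnbr G v, (G.dist u y : ℝ) < ∑ y ∈ cnbr G v, (3:ℝ) := h1
          _ = 3 * ((degG G v : ℝ) + 1) := by
              rw [Finset.sum_const, hb, nsmul_eq_mul]; push_cast; ring
      have htot : ∑ x ∈ cnbr G u, ∑ y ∈ cnbr G v, (G.dist x y : ℝ)
          < 3 * (((degG G u : ℝ) + 1) * ((degG G v : ℝ) + 1)) := by
        have h1 : ∑ x ∈ cnbr G u, ∑ y ∈ cnbr G v, (G.dist x y : ℝ)
            < ∑ x ∈ cnbr G u, 3 * ((degG G v : ℝ) + 1) := by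
          refine Finset.sum_lt_sum hbound ⟨u, Finset.mem_insert_self u _, hstrict⟩
        calc ∑ x ∈ cnbr G u, ∑ y ∈ cnbr G v, (G.dist x y : ℝ)
            < ∑ x ∈ cnbr G u, 3 * ((degG G v : ℝ) + 1) := h1
          _ = 3 * (((degG G u : ℝ) + 1) * ((degG G v : ℝ) + 1)) := by
              rw [Finset.sum_const, ha, nsmul_eq_mul]; push_cast; ring
      have hfac : ∑ x ∈ cnbr G u, ∑ y ∈ cnbr G v,
            (G.dist x y : ℝ) * (1 / (((degG G u : ℝ) + 1) * ((degG G v : ℝ) + 1)))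
          = (∑ x ∈ cnbr G u, ∑ y ∈ cnbr G v, (G.dist x y : ℝ))
              * (1 / (((degG G u : ℝ) + 1) * ((degG G v : ℝ) + 1))) := by
        rw [Finset.sum_mul]
        refine Finset.sum_congr rfl fun x _ => ?_
        rw [Finset.sum_mul]
      rw [hfac, mul_one_div, div_lt_iff₀ (by positivity)]
      linarith [htot]
  -- assembling everything
  have hbdd : BddBelow {t : ℝ | ∃ z, IsPlanG G u v z ∧ planCostG G u v z = t} :=
    ⟨(δ:ℝ)/q, by rintro t ⟨z, hz, rfl⟩; exact planB z hz⟩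
  have hmem : (δ:ℝ)/q ∈ {t : ℝ | ∃ z, IsPlanG G u v z ∧ planCostG G u v z = t} := by
    obtain ⟨z, hz, hcost⟩ := planA σ0
    exact ⟨z, hz, by rw [hcost, hσ0]⟩
  have hEMD : EMDG G u v = (δ:ℝ)/q := by
    unfold EMDG
    refine le_antisymm (csInf_le hbdd hmem) (le_csInf ⟨_, hmem⟩ ?_)
    rintro t ⟨z, hz, rfl⟩
    exact planB z hz
  have hlt3 : EMDG G u v < 3 := by
    obtain ⟨z, hz, hcost⟩ := hprod
    calc EMDG G u v ≤ planCostG G u v z := by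
          unfold EMDG; exact csInf_le hbdd ⟨z, hz, rfl⟩
      _ < 3 := hcost
  refine ⟨δ, ?_, ?_, ?_⟩
  · rw [hEMD]; field_simp
  · have h1 : (δ:ℝ)/q < 3 := hEMD ▸ hlt3
    rw [div_lt_iff₀ hqR] at h1
    have h2 : (δ:ℝ) < ((3 * q : ℕ) : ℝ) := by push_cast; linarith
    exact_mod_cast h2
  · unfold RicG
    rw [hEMD, sub_div, div_self hqR.ne']
end

section
/- For every minimum-cost perfect matching T of the blow-up bipartite graph Ĥ there exists a minimum-cost perfect matching T' of Ĥ (of the same, minimum, cost) such that for every vertex w ∈ {u,v} ∪ (N_G(u) ∩ N_G(v)), each of the b right vertices (w,1),…,(w,b) is matched by T' to a left vertex of the form (w,k); in particular these b matched pairs all have weight dist_G(w,w) = 0. -/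
open Finset
open scoped Classical

variable {V : Type*}

/-- The cost of a perfect matching (bijection) of the blow-up bipartite graph `Ĥ`,
whose left vertices are pairs `(x,k)` with `x ∈ N[u]`, `k < a`, right vertices are
pairs `(y,ℓ)` with `y ∈ N[v]`, `ℓ < b`, and pair weights the distance `dist_G(x,y)`. -/
noncomputable def matchCost [Fintype V] (G : SimpleGraph V) (u v : V) (a b : ℕ)
    (σ : (↥(cnbr G u) × Fin a) ≃ (↥(cnbr G v) × Fin b)) : ℕ :=
  ∑ x : ↥(cnbr G u) × Fin a, G.dist (x.1 : V) (((σ x).1 : V))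

lemma reach_of_mem_cnbr [Fintype V] (G : SimpleGraph V) (u : V) {w : V}
    (h : w ∈ cnbr G u) : G.Reachable w u := by
  rcases Finset.mem_insert.mp h with h | h
  · exact h ▸ SimpleGraph.Reachable.refl w
  · exact ((Finset.mem_filter.mp h).2.symm).reachable

lemma dist_tri {G : SimpleGraph V} {x y z : V}
    (h1 : G.Reachable x y) (h2 : G.Reachable y z) :
    G.dist x z ≤ G.dist x y + G.dist y z := by
  obtain ⟨p, hp⟩ := h1.exists_walk_length_eq_dist
  obtain ⟨q, hq⟩ := h2.exists_walk_length_eq_dist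
  rw [← hp, ← hq, ← SimpleGraph.Walk.length_append]
  exact SimpleGraph.dist_le _

lemma mainAux [Fintype V] (G : SimpleGraph V) (u v : V) (huv : G.Adj u v)
    {a b : ℕ} (hba : b ≤ a) :
    ∀ n (T : (↥(cnbr G u) × Fin a) ≃ (↥(cnbr G v) × Fin b)),
      (Finset.univ.filter fun p : ↥(cnbr G v) × Fin b =>
        ((p.1 : V) ∈ cnbr G u ∧ ((T.symm p).1 : V) ≠ (p.1 : V))).card ≤ n →
      (∀ T', matchCost G u v a b T ≤ matchCost G u v a b T') →
      ∃ T'', matchCost G u v a b T'' = matchCost G u v a b T ∧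
        (∀ T', matchCost G u v a b T'' ≤ matchCost G u v a b T') ∧
        ∀ (x : V) (hxu : x ∈ cnbr G u) (hxv : x ∈ cnbr G v),
          ∀ ℓ : Fin b, ∃ k : Fin a, T'' (⟨x, hxu⟩, k) = (⟨x, hxv⟩, ℓ) := by
  intro n
  induction n with
  | zero =>
    intro T hcard hmin
    refine ⟨T, rfl, hmin, ?_⟩
    intro x hxu hxv ℓ
    set p : ↥(cnbr G v) × Fin b := (⟨x, hxv⟩, ℓ) with hp
    have hfe : (Finset.univ.filter fun p : ↥(cnbr G v) × Fin b =>
        ((p.1 : V) ∈ cnbr G u ∧ ((T.symm p).1 : V) ≠ (p.1 : V))) = ∅ :=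
      Finset.card_eq_zero.mp (Nat.le_zero.mp hcard)
    have hnp : ¬ (((p.1 : V) ∈ cnbr G u) ∧ ((T.symm p).1 : V) ≠ (p.1 : V)) := by
      intro h
      have : p ∈ (∅ : Finset (↥(cnbr G v) × Fin b)) := by
        rw [← hfe]; exact Finset.mem_filter.mpr ⟨Finset.mem_univ _, h⟩
      simpa using this
    have hx : ((T.symm p).1 : V) = x := by
      by_contra hc
      exact hnp ⟨hxu, hc⟩
    refine ⟨(T.symm p).2, ?_⟩
    have h1 : T.symm p = (⟨x, hxu⟩, (T.symm p).2) := by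
      refine Prod.ext (Subtype.ext hx) rfl
    rw [← h1, Equiv.apply_symm_apply]
  | succ n ih =>
    intro T hcard hmin
    by_cases hemp : (Finset.univ.filter fun p : ↥(cnbr G v) × Fin b =>
        ((p.1 : V) ∈ cnbr G u ∧ ((T.symm p).1 : V) ≠ (p.1 : V))) = ∅
    · exact ih T (by rw [hemp]; simp) hmin
    · obtain ⟨p, hpmem⟩ := Finset.nonempty_iff_ne_empty.mpr hemp
      obtain ⟨-, hpu, hpne⟩ := Finset.mem_filter.mp hpmem
      set L1 : ↥(cnbr G u) × Fin a := T.symm p with hL1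
      -- find a left copy of x = p.1 mapped away from x
      have hex : ∃ k' : Fin a, ((T (⟨(p.1 : V), hpu⟩, k')).1 : V) ≠ (p.1 : V) := by
        by_contra hall
        push_neg at hall
        have finj : Function.Injective
            (fun k : Fin a => (⟨(T (⟨(p.1 : V), hpu⟩, k)).2, by
              intro heq2
              have h1 : (T (⟨(p.1 : V), hpu⟩, k)).1 = p.1 := Subtype.ext (hall k)
              have hTp : T (⟨(p.1 : V), hpu⟩, k) = p := Prod.ext h1 heq2
              have : L1 = (⟨(p.1 : V), hpu⟩, k) := by
                have h3 := congrArg T.symm hTp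
                rw [Equiv.symm_apply_apply] at h3
                rw [hL1]
                exact h3.symm
              exact hpne (by rw [this])⟩ : {m : Fin b // m ≠ p.2})) := by
          intro k k' hkk'
          have h2 : (T (⟨(p.1 : V), hpu⟩, k)).2 = (T (⟨(p.1 : V), hpu⟩, k')).2 :=
            congrArg Subtype.val hkk'
          have h1 : (T (⟨(p.1 : V), hpu⟩, k)).1 = (T (⟨(p.1 : V), hpu⟩, k')).1 :=
            Subtype.ext ((hall k).trans (hall k').symm)
          have := T.injective (Prod.ext h1 h2)
          exact (Prod.mk.injEq _ _ _ _).mp this |>.2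
        have hca : a ≤ Fintype.card {m : Fin b // m ≠ p.2} := by
          simpa using Fintype.card_le_of_injective _ finj
        have hcb : Fintype.card {m : Fin b // m ≠ p.2} < b := by
          simpa using Fintype.card_subtype_lt (p := fun m : Fin b => m ≠ p.2)
            (x := p.2) (by simp)
        omega
      obtain ⟨k', hk'⟩ := hex
      set L2 : ↥(cnbr G u) × Fin a := (⟨(p.1 : V), hpu⟩, k') with hL2
      have hL2v : (L2.1 : V) = (p.1 : V) := rfl
      have hTL1 : T L1 = p := Equiv.apply_symm_apply T p
      have hL12 : L1 ≠ L2 := by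
        intro h
        apply hpne
        rw [hL1] at h
        rw [hL1, h]
      set T' := (Equiv.swap L1 L2).trans T with hT'
      have hT'L1 : T' L1 = T L2 := by simp [hT', Equiv.swap_apply_left]
      have hT'L2 : T' L2 = p := by simp [hT', Equiv.swap_apply_right, hTL1]
      have hT'symm : ∀ q, T'.symm q = Equiv.swap L1 L2 (T.symm q) := by
        intro q; simp [hT']
      -- cost comparison
      have hsplit : ∀ (σ : (↥(cnbr G u) × Fin a) ≃ (↥(cnbr G v) × Fin b)),
          matchCost G u v a b σ
            = (∑ z ∈ (Finset.univ \ {L1, L2}), G.dist (z.1 : V) ((σ z).1 : V))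
              + (G.dist (L1.1 : V) ((σ L1).1 : V) + G.dist (L2.1 : V) ((σ L2).1 : V)) := by
        intro σ
        rw [matchCost, ← Finset.sum_sdiff (Finset.subset_univ ({L1, L2} : Finset _))]
        congr 1
        exact Finset.sum_pair hL12
      have hle : matchCost G u v a b T' ≤ matchCost G u v a b T := by
        rw [hsplit T', hsplit T]
        have hdiff : (∑ z ∈ (Finset.univ \ {L1, L2}), G.dist (z.1 : V) ((T' z).1 : V))
            = ∑ z ∈ (Finset.univ \ {L1, L2}), G.dist (z.1 : V) ((T z).1 : V) := by
          refine Finset.sum_congr rfl ?_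
          intro z hz
          simp only [Finset.mem_sdiff, Finset.mem_insert, Finset.mem_singleton] at hz
          push_neg at hz
          rw [hT']
          simp [Equiv.swap_apply_of_ne_of_ne hz.2.1 hz.2.2]
        rw [hdiff]
        apply Nat.add_le_add_left
        rw [hT'L1, hT'L2, hTL1, hL2v, SimpleGraph.dist_self, add_zero]
        have hry : G.Reachable (L1.1 : V) (p.1 : V) :=
          (reach_of_mem_cnbr G u L1.1.2).trans (reach_of_mem_cnbr G u hpu).symm
        have hrz : G.Reachable (p.1 : V) ((T L2).1 : V) :=
          ((reach_of_mem_cnbr G u hpu).trans huv.reachable).trans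
            (reach_of_mem_cnbr G v (T L2).1.2).symm
        calc G.dist (L1.1 : V) ((T L2).1 : V)
            ≤ G.dist (L1.1 : V) (p.1 : V) + G.dist (p.1 : V) ((T L2).1 : V) :=
              dist_tri hry hrz
          _ = G.dist (L1.1 : V) (p.1 : V) + G.dist (L2.1 : V) ((T L2).1 : V) := by
              rw [hL2v]
      have heq : matchCost G u v a b T' = matchCost G u v a b T :=
        le_antisymm hle (hmin T')
      have hmin' : ∀ S, matchCost G u v a b T' ≤ matchCost G u v a b S := by
        intro S; rw [heq]; exact hmin S
      -- bad set decreases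
      have hsub : (Finset.univ.filter fun q : ↥(cnbr G v) × Fin b =>
            ((q.1 : V) ∈ cnbr G u ∧ ((T'.symm q).1 : V) ≠ (q.1 : V)))
          ⊆ (Finset.univ.filter fun q : ↥(cnbr G v) × Fin b =>
            ((q.1 : V) ∈ cnbr G u ∧ ((T.symm q).1 : V) ≠ (q.1 : V))).erase p := by
        intro q hq
        obtain ⟨-, hqu, hqne⟩ := Finset.mem_filter.mp hq
        have hqp : q ≠ p := by
          intro h
          subst h
          apply hqne
          rw [hT'symm, ← hL1, Equiv.swap_apply_left, hL2v]
        refine Finset.mem_erase.mpr ⟨hqp, Finset.mem_filter.mpr ⟨Finset.mem_univ _, hqu, ?_⟩⟩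
        rcases eq_or_ne (T.symm q) L1 with h1 | h1
        · exfalso
          apply hqp
          have : T (T.symm q) = T L1 := by rw [h1]
          rwa [Equiv.apply_symm_apply, hTL1] at this
        rcases eq_or_ne (T.symm q) L2 with h2 | h2
        · have hqT : q = T L2 := by
            have : T (T.symm q) = T L2 := by rw [h2]
            rwa [Equiv.apply_symm_apply] at this
          rw [h2, hL2v, hqT]
          exact fun h => hk' h.symm
        · have := hT'symm q
          rw [Equiv.swap_apply_of_ne_of_ne h1 h2] at this
          rw [← this]
          exact hqne
      have hcard' : (Finset.univ.filter fun q : ↥(cnbr G v) × Fin b =>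
            ((q.1 : V) ∈ cnbr G u ∧ ((T'.symm q).1 : V) ≠ (q.1 : V))).card ≤ n := by
        have h1 := Finset.card_le_card hsub
        rw [Finset.card_erase_of_mem hpmem] at h1
        omega
      obtain ⟨T'', hc, hm, hprop⟩ := ih T' hcard' hmin'
      exact ⟨T'', hc.trans heq, hm, hprop⟩


/-- every minimum-cost perfect matching `T` of `Ĥ` can be replaced by a
minimum-cost perfect matching `T'` of the same cost in which, for every
`w ∈ {u,v} ∪ (N(u) ∩ N(v))`, each right vertex `(w,ℓ)` is matched to some left vertex
`(w,k)`. -/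
theorem stmt4 [Fintype V] (G : SimpleGraph V) (u v : V) (huv : G.Adj u v)
    (hdeg : degG G u ≤ degG G v)
    (r s q a b : ℕ) (hr : r = degG G u + 1) (hs : s = degG G v + 1)
    (hq : q = Nat.lcm r s) (ha : a = q / r) (hb : b = q / s)
    (T : (↥(cnbr G u) × Fin a) ≃ (↥(cnbr G v) × Fin b))
    (hT : ∀ T', matchCost G u v a b T ≤ matchCost G u v a b T') :
    ∃ T'' : (↥(cnbr G u) × Fin a) ≃ (↥(cnbr G v) × Fin b),
      matchCost G u v a b T'' = matchCost G u v a b T ∧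
      (∀ T', matchCost G u v a b T'' ≤ matchCost G u v a b T') ∧
      ∀ (x : V) (hxu : x ∈ cnbr G u) (hxv : x ∈ cnbr G v),
        (x = u ∨ x = v ∨ (G.Adj u x ∧ G.Adj v x)) →
        ∀ ℓ : Fin b, ∃ k : Fin a, T'' (⟨x, hxu⟩, k) = (⟨x, hxv⟩, ℓ) := by
  have hr0 : 0 < r := by omega
  have hs0 : 0 < s := by omega
  have hrs : r ≤ s := by omega
  have hdr : r ∣ q := hq ▸ Nat.dvd_lcm_left r s
  have hds : s ∣ q := hq ▸ Nat.dvd_lcm_right r s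
  have har : a * r = q := ha ▸ Nat.div_mul_cancel hdr
  have hbs : b * s = q := hb ▸ Nat.div_mul_cancel hds
  have hba : b ≤ a := by
    have h1 : b * r ≤ a * r := by
      calc b * r ≤ b * s := Nat.mul_le_mul_left b hrs
        _ = q := hbs
        _ = a * r := har.symm
    exact Nat.le_of_mul_le_mul_right h1 hr0
  obtain ⟨T'', h1, h2, h3⟩ := mainAux G u v huv hba
    ((Finset.univ.filter fun p : ↥(cnbr G v) × Fin b =>
      ((p.1 : V) ∈ cnbr G u ∧ ((T.symm p).1 : V) ≠ (p.1 : V))).card) T le_rfl hT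
  exact ⟨T'', h1, h2, fun x hxu hxv _ ℓ => h3 x hxu hxv ℓ⟩
end

section
/- There exists a transport plan z for (G,u,v) achieving the minimum cost EMD_G(u,v) such that z(w,w) = 1/(deg_G(v)+1) for every vertex w ∈ {u,v} ∪ (N_G(u) ∩ N_G(v)); i.e., an optimal plan that ships an amount 1/(deg_G(v)+1) of mass from w to itself (at zero transportation cost) for w = u, for w = v, and for every common neighbor w of u and v. -/
open Finset
open scoped Classical

variable {V : Type*}

/-!
An optimal plan exists because the plans form a compact set. If an optimal plan ships less than
`1/(deg v + 1)` from some `w ∈ N[u] ∩ N[v]` to itself, reroute it: mass travelling `x → w → y` is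
sent directly from `x` to `y`, which by the triangle inequality costs no more, and the freed
capacity is used to ship `1/(deg v + 1)` from `w` to itself; this is possible because `w` carries
`1/(deg u + 1) ≥ 1/(deg v + 1)` on the source side. Rerouting never decreases a diagonal entry,
so treating the vertices of `N[u] ∩ N[v] = {u, v} ∪ (N(u) ∩ N(v))` one at a time yields an optimal
plan saturating all of them.
-/

section Coupling

variable {α : Type*}

structure IsCoupling (s t : Finset α) (μ ν : α → ℝ) (z : α → α → ℝ) : Prop where
  nonneg : ∀ x y, 0 ≤ z x y
  sum_row : ∀ x ∈ s, ∑ y ∈ t, z x y = μ x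
  sum_col : ∀ y ∈ t, ∑ x ∈ s, z x y = ν y

def couplingCost (s t : Finset α) (d z : α → α → ℝ) : ℝ :=
  ∑ x ∈ s, ∑ y ∈ t, d x y * z x y

noncomputable def truncate (s t : Finset α) (z : α → α → ℝ) : α → α → ℝ :=
  fun x y => if x ∈ s ∧ y ∈ t then z x y else 0

variable {s t : Finset α} {μ ν : α → ℝ} {d z : α → α → ℝ}

namespace IsCoupling

lemma apply_le_right (hz : IsCoupling s t μ ν z) {x y : α} (hx : x ∈ s) (hy : y ∈ t) :
    z x y ≤ ν y :=
  (single_le_sum (fun x' _ => hz.nonneg x' y) hx).trans_eq (hz.sum_col y hy)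

lemma sum_erase_row (hz : IsCoupling s t μ ν z) {x w : α} (hx : x ∈ s) (hw : w ∈ t) :
    ∑ y ∈ t.erase w, z x y = μ x - z x w := by
  rw [sum_erase_eq_sub hw, hz.sum_row x hx]

lemma sum_erase_col (hz : IsCoupling s t μ ν z) {y w : α} (hy : y ∈ t) (hw : w ∈ s) :
    ∑ x ∈ s.erase w, z x y = ν y - z w y := by
  rw [sum_erase_eq_sub hw, hz.sum_col y hy]

protected lemma truncate (hz : IsCoupling s t μ ν z) : IsCoupling s t μ ν (truncate s t z) where
  nonneg x y := by unfold truncate; split_ifs <;> simp [hz.nonneg x y]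
  sum_row x hx := by
    rw [← hz.sum_row x hx]; exact sum_congr rfl fun y hy => if_pos ⟨hx, hy⟩
  sum_col y hy := by
    rw [← hz.sum_col y hy]; exact sum_congr rfl fun x hx => if_pos ⟨hx, hy⟩

end IsCoupling

lemma couplingCost_truncate : couplingCost s t d (truncate s t z) = couplingCost s t d z :=
  sum_congr rfl fun x hx => sum_congr rfl fun y hy => by rw [truncate, if_pos ⟨hx, hy⟩]

lemma isCoupling_mul (hμ : 0 ≤ μ) (hν : 0 ≤ ν) (hμ₁ : ∑ x ∈ s, μ x = 1)
    (hν₁ : ∑ y ∈ t, ν y = 1) : IsCoupling s t μ ν fun x y => μ x * ν y where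
  nonneg x y := mul_nonneg (hμ x) (hν y)
  sum_row x _ := by rw [← mul_sum, hν₁, mul_one]
  sum_col y _ := by rw [← sum_mul, hμ₁, one_mul]

lemma isClosed_setOf_isCoupling (s t : Finset α) (μ ν : α → ℝ) :
    IsClosed {z : α → α → ℝ | IsCoupling s t μ ν z} := by
  have : {z : α → α → ℝ | IsCoupling s t μ ν z} =
      (⋂ x, ⋂ y, {z | 0 ≤ z x y}) ∩ (⋂ x ∈ s, {z | ∑ y ∈ t, z x y = μ x}) ∩
        ⋂ y ∈ t, {z | ∑ x ∈ s, z x y = ν y} := by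
    ext z
    simp only [Set.mem_ofPred_eq, Set.mem_inter_iff, Set.mem_iInter]
    exact ⟨fun h => ⟨⟨h.1, h.2⟩, h.3⟩, fun ⟨⟨h₁, h₂⟩, h₃⟩ => ⟨h₁, h₂, h₃⟩⟩
  rw [this]
  refine .inter (.inter ?_ ?_) ?_
  · exact isClosed_iInter fun x => isClosed_iInter fun y =>
      isClosed_le continuous_const (by fun_prop)
  · exact isClosed_biInter fun x _ => isClosed_eq (by fun_prop) continuous_const
  · exact isClosed_biInter fun y _ => isClosed_eq (by fun_prop) continuous_const

lemma exists_isCoupling_forall_couplingCost_le (h : ∃ z, IsCoupling s t μ ν z) :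
    ∃ z, IsCoupling s t μ ν z ∧
      ∀ z', IsCoupling s t μ ν z' → couplingCost s t d z ≤ couplingCost s t d z' := by
  set K := {z | IsCoupling s t μ ν z} ∩ Set.Icc 0 (truncate s t fun _ y => ν y)
  have hbound : ∀ z, IsCoupling s t μ ν z → truncate s t z ∈ K := fun z hz =>
    ⟨hz.truncate, hz.truncate.nonneg, fun x y => by
      unfold truncate; split_ifs with h
      exacts [hz.apply_le_right h.1 h.2, le_rfl]⟩
  have hK : IsCompact K :=
    isCompact_Icc.inter_left (isClosed_setOf_isCoupling s t μ ν)
  obtain ⟨z₀, hz₀⟩ := h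
  have hcont : Continuous (couplingCost s t d) := by unfold couplingCost; fun_prop
  obtain ⟨z, hzK, hmin⟩ := hK.exists_isMinOn ⟨_, hbound z₀ hz₀⟩ hcont.continuousOn
  exact ⟨z, hzK.1, fun z' hz' => (hmin (hbound z' hz')).trans_eq couplingCost_truncate⟩


lemma sum_sum_eq_add_sum_erase {M : Type*} [AddCommMonoid M] {w : α} (hs : w ∈ s)
    (ht : w ∈ t) (f : α → α → M) :
    ∑ x ∈ s, ∑ y ∈ t, f x y = f w w + ∑ y ∈ t.erase w, f w y +
      (∑ x ∈ s.erase w, f x w + ∑ x ∈ s.erase w, ∑ y ∈ t.erase w, f x y) := by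
  rw [← add_sum_erase s _ hs, ← add_sum_erase t _ ht, ← sum_add_distrib]
  simp only [add_sum_erase t _ ht]

variable (μ ν) in
/-- Ships `ν w` from `w` to itself: with `r = μ w - z w w`, the mass `z x w * z w y / r` that `z`
routes along `x → w → y` goes directly from `x` to `y`, and the rest of the row of `w` is rescaled
so that the marginals are kept. -/
noncomputable def reroute (z : α → α → ℝ) (w : α) : α → α → ℝ := fun x y =>
  if x = w then (if y = w then ν w else z w y * (μ w - ν w) / (μ w - z w w))
  else if y = w then 0 else z x y + z x w * z w y / (μ w - z w w)

section Reroute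

variable {w : α}

@[simp] lemma reroute_self : reroute μ ν z w w w = ν w := by simp [reroute]

lemma reroute_left {y : α} (hy : y ≠ w) :
    reroute μ ν z w w y = z w y * (μ w - ν w) / (μ w - z w w) := by simp [reroute, hy]

lemma reroute_right {x : α} (hx : x ≠ w) : reroute μ ν z w x w = 0 := by simp [reroute, hx]

lemma reroute_of_ne {x y : α} (hx : x ≠ w) (hy : y ≠ w) :
    reroute μ ν z w x y = z x y + z x w * z w y / (μ w - z w w) := by simp [reroute, hx, hy]

variable (hz : IsCoupling s t μ ν z) (hlt : z w w < ν w) (hle : ν w ≤ μ w)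
include hz hlt hle

lemma le_reroute_diag (x : α) : z x x ≤ reroute μ ν z w x x := by
  rcases eq_or_ne x w with rfl | hx
  · simpa using hlt.le
  · rw [reroute_of_ne hx hx, le_add_iff_nonneg_right]
    have := hz.nonneg x w; have := hz.nonneg w x
    exact div_nonneg (by positivity) (by linarith)

variable (hws : w ∈ s) (hwt : w ∈ t)
include hws hwt

lemma isCoupling_reroute : IsCoupling s t μ ν (reroute μ ν z w) := by
  have hr : 0 < μ w - z w w := by linarith
  refine ⟨fun x y => ?_, fun x hx => ?_, fun y hy => ?_⟩
  · have := hz.nonneg x y; have := hz.nonneg x w; have := hz.nonneg w y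
    unfold reroute; split_ifs
    · linarith [hz.nonneg w w]
    · exact div_nonneg (mul_nonneg (hz.nonneg w y) (by linarith)) hr.le
    · exact le_rfl
    · positivity
  · rw [← add_sum_erase t _ hwt]
    rcases eq_or_ne x w with rfl | hxw
    · rw [reroute_self, sum_congr rfl fun y hy => reroute_left (ne_of_mem_erase hy),
        ← sum_div, ← sum_mul, hz.sum_erase_row hx hwt]
      field_simp; ring
    · rw [reroute_right hxw, sum_congr rfl fun y hy => reroute_of_ne hxw (ne_of_mem_erase hy),
        sum_add_distrib, ← sum_div, ← mul_sum, hz.sum_erase_row hx hwt,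
        hz.sum_erase_row hws hwt]
      field_simp; ring
  · rw [← add_sum_erase s _ hws]
    rcases eq_or_ne y w with rfl | hyw
    · rw [reroute_self, sum_congr rfl fun x hx => reroute_right (ne_of_mem_erase hx)]
      simp
    · rw [reroute_left hyw, sum_congr rfl fun x hx => reroute_of_ne (ne_of_mem_erase hx) hyw,
        sum_add_distrib, ← sum_div, ← sum_mul, hz.sum_erase_col hy hws,
        hz.sum_erase_col hwt hws]
      field_simp; ring

lemma couplingCost_reroute_le (hd : d w w = 0)
    (htri : ∀ x ∈ s, ∀ y ∈ t, d x y ≤ d x w + d w y) :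
    couplingCost s t d (reroute μ ν z w) ≤ couplingCost s t d z := by
  have hr : 0 < μ w - z w w := by linarith
  set Dx := ∑ x ∈ s.erase w, d x w * z x w
  set Dy := ∑ y ∈ t.erase w, d w y * z w y
  set C := ∑ x ∈ s.erase w, ∑ y ∈ t.erase w, d x y * z x y
  set R := ∑ x ∈ s.erase w, ∑ y ∈ t.erase w, d x y * (z x w * z w y / (μ w - z w w))
  have hcost : couplingCost s t d z = Dy + (Dx + C) := by
    rw [couplingCost, sum_sum_eq_add_sum_erase hws hwt, hd, zero_mul, zero_add]
  have hrow : ∑ y ∈ t.erase w, d w y * reroute μ ν z w w y =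
      Dy * ((μ w - ν w) / (μ w - z w w)) := by
    rw [sum_mul]
    exact sum_congr rfl fun y hy => by rw [reroute_left (ne_of_mem_erase hy)]; ring
  have hcol : ∑ x ∈ s.erase w, d x w * reroute μ ν z w x w = 0 :=
    sum_eq_zero fun x hx => by rw [reroute_right (ne_of_mem_erase hx), mul_zero]
  have hrest : ∑ x ∈ s.erase w, ∑ y ∈ t.erase w, d x y * reroute μ ν z w x y = C + R := by
    rw [← sum_add_distrib]
    refine sum_congr rfl fun x hx => ?_
    rw [← sum_add_distrib]
    refine sum_congr rfl fun y hy => ?_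
    rw [reroute_of_ne (ne_of_mem_erase hx) (ne_of_mem_erase hy)]
    ring
  have hR : R ≤ (Dx * (μ w - z w w) + (ν w - z w w) * Dy) / (μ w - z w w) := by
    calc R ≤ ∑ x ∈ s.erase w, ∑ y ∈ t.erase w,
          (d x w + d w y) * (z x w * z w y / (μ w - z w w)) := by
          refine sum_le_sum fun x hx => sum_le_sum fun y hy => ?_
          have := hz.nonneg x w; have := hz.nonneg w y
          exact mul_le_mul_of_nonneg_right (htri x (mem_of_mem_erase hx) y (mem_of_mem_erase hy))
            (by positivity)
      _ = (Dx * ∑ y ∈ t.erase w, z w y + (∑ x ∈ s.erase w, z x w) * Dy) / (μ w - z w w) := by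
          rw [sum_mul_sum, sum_mul_sum, ← sum_add_distrib, sum_div]
          refine sum_congr rfl fun x _ => ?_
          rw [← sum_add_distrib, sum_div]
          exact sum_congr rfl fun y _ => by ring
      _ = _ := by rw [hz.sum_erase_row hws hwt, hz.sum_erase_col hwt hws]
  have hkey : Dy * ((μ w - ν w) / (μ w - z w w)) +
      (Dx * (μ w - z w w) + (ν w - z w w) * Dy) / (μ w - z w w) = Dy + Dx := by
    field_simp; ring
  rw [hcost, couplingCost, sum_sum_eq_add_sum_erase hws hwt, hd, zero_mul, zero_add, hrow, hcol,
    hrest, zero_add]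
  linarith

end Reroute

lemma IsCoupling.exists_diag_eq (hz : IsCoupling s t μ ν z) {w : α} (hws : w ∈ s)
    (hwt : w ∈ t) (hle : ν w ≤ μ w) (hd : d w w = 0)
    (htri : ∀ x ∈ s, ∀ y ∈ t, d x y ≤ d x w + d w y) :
    ∃ z', IsCoupling s t μ ν z' ∧ couplingCost s t d z' ≤ couplingCost s t d z ∧
      z' w w = ν w ∧ ∀ x, z x x ≤ z' x x := by
  rcases (hz.apply_le_right hws hwt).eq_or_lt with heq | hlt
  · exact ⟨z, hz, le_rfl, heq, fun _ => le_rfl⟩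
  · exact ⟨reroute μ ν z w, isCoupling_reroute hz hlt hle hws hwt,
      couplingCost_reroute_le hz hlt hle hws hwt hd htri, reroute_self,
      le_reroute_diag hz hlt hle⟩

variable (hle : ∀ w ∈ s ∩ t, ν w ≤ μ w) (hd : ∀ w ∈ s ∩ t, d w w = 0)
  (htri : ∀ x ∈ s, ∀ w ∈ s ∩ t, ∀ y ∈ t, d x y ≤ d x w + d w y)
include hle hd htri

lemma IsCoupling.exists_diag_eq_on (hz : IsCoupling s t μ ν z) {S : Finset α}
    (hS : S ⊆ s ∩ t) :
    ∃ z', IsCoupling s t μ ν z' ∧ couplingCost s t d z' ≤ couplingCost s t d z ∧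
      ∀ w ∈ S, z' w w = ν w := by
  induction S using Finset.induction_on with
  | empty => exact ⟨z, hz, le_rfl, by simp⟩
  | insert w S _ ih =>
    obtain ⟨z₁, hz₁, hcost₁, hdiag₁⟩ := ih ((subset_insert w S).trans hS)
    have hw := hS (mem_insert_self w S)
    obtain ⟨hws, hwt⟩ := mem_inter.1 hw
    obtain ⟨z₂, hz₂, hcost₂, hww, hmono⟩ :=
      hz₁.exists_diag_eq hws hwt (hle w hw) (hd w hw) fun x hx => htri x hx w hw
    refine ⟨z₂, hz₂, hcost₂.trans hcost₁, (forall_mem_insert _ _ _).2 ⟨hww, fun w' hw' => ?_⟩⟩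
    obtain ⟨hw's, hw't⟩ := mem_inter.1 (hS (mem_insert_of_mem hw'))
    exact (hz₂.apply_le_right hw's hw't).antisymm (hdiag₁ w' hw' ▸ hmono w')

theorem exists_optimal_coupling_diag_eq (h : ∃ z, IsCoupling s t μ ν z) :
    ∃ z, IsCoupling s t μ ν z ∧
      (∀ z', IsCoupling s t μ ν z' → couplingCost s t d z ≤ couplingCost s t d z') ∧
      ∀ w ∈ s ∩ t, z w w = ν w := by
  obtain ⟨z₀, hz₀, hmin⟩ := exists_isCoupling_forall_couplingCost_le (d := d) h
  obtain ⟨z, hz, hcost, hdiag⟩ := hz₀.exists_diag_eq_on hle hd htri subset_rfl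
  exact ⟨z, hz, fun z' hz' => hcost.trans (hmin z' hz'), hdiag⟩

end Coupling

section Graph

variable [Fintype V] {G : SimpleGraph V}

lemma mem_cnbr {w x : V} : x ∈ cnbr G w ↔ x = w ∨ G.Adj w x := by
  simp [cnbr, nbrF]

lemma reachable_of_mem_cnbr {w x : V} (h : x ∈ cnbr G w) : G.Reachable w x := by
  rcases mem_cnbr.1 h with rfl | h
  exacts [.rfl, h.reachable]

lemma dist_le_dist_add_dist_of_mem_cnbr {u w x : V} (hx : x ∈ cnbr G u) (hw : w ∈ cnbr G u)
    (y : V) : (G.dist x y : ℝ) ≤ G.dist x w + G.dist w y := by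
  have hxw := (reachable_of_mem_cnbr hx).symm.trans (reachable_of_mem_cnbr hw)
  exact_mod_cast hxw.dist_triangle_left y

lemma sum_cnbr_one_div (w : V) : ∑ _x ∈ cnbr G w, 1 / ((degG G w : ℝ) + 1) = 1 := by
  rw [sum_const, cnbr, card_insert_of_notMem (by simp [nbrF]), nsmul_eq_mul]
  push_cast [degG]
  field_simp

lemma isPlanG_iff {u v : V} {z : V → V → ℝ} :
    IsPlanG G u v z ↔ IsCoupling (cnbr G u) (cnbr G v) (fun _ => 1 / ((degG G u : ℝ) + 1))
      (fun _ => 1 / ((degG G v : ℝ) + 1)) z :=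
  ⟨fun ⟨h₀, h₁, h₂⟩ => ⟨h₀, h₁, h₂⟩, fun ⟨h₀, h₁, h₂⟩ => ⟨h₀, h₁, h₂⟩⟩

lemma EMDG_eq_planCostG {u v : V} {z : V → V → ℝ} (hz : IsPlanG G u v z)
    (hmin : ∀ z', IsPlanG G u v z' → planCostG G u v z ≤ planCostG G u v z') :
    EMDG G u v = planCostG G u v z :=
  IsLeast.csInf_eq ⟨⟨z, hz, rfl⟩, by rintro _ ⟨z', hz', rfl⟩; exact hmin z' hz'⟩

end Graph

/-- there is an optimal transport plan shipping mass `1/(deg_G(v)+1)` from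
`w` to itself for `w = u`, `w = v`, and every common neighbor `w` of `u` and `v`. -/
theorem stmt5 [Fintype V] (G : SimpleGraph V) (u v : V) (huv : G.Adj u v)
    (hdeg : degG G u ≤ degG G v) :
    ∃ z : V → V → ℝ,
      IsPlanG G u v z ∧
      planCostG G u v z = EMDG G u v ∧
      z u u = 1 / ((degG G v : ℝ) + 1) ∧
      z v v = 1 / ((degG G v : ℝ) + 1) ∧
      ∀ w : V, G.Adj u w → G.Adj v w → z w w = 1 / ((degG G v : ℝ) + 1) := by
  have hle : 1 / ((degG G v : ℝ) + 1) ≤ 1 / ((degG G u : ℝ) + 1) :=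
    one_div_le_one_div_of_le (by positivity) (by exact_mod_cast Nat.add_le_add_right hdeg 1)
  have hplan : ∃ z, IsCoupling (cnbr G u) (cnbr G v) (fun _ => 1 / ((degG G u : ℝ) + 1))
      (fun _ => 1 / ((degG G v : ℝ) + 1)) z :=
    ⟨_, isCoupling_mul (fun _ => by positivity) (fun _ => by positivity) (sum_cnbr_one_div u)
      (sum_cnbr_one_div v)⟩
  obtain ⟨z, hz, hmin, hdiag⟩ := exists_optimal_coupling_diag_eq (fun _ _ => hle)
    (fun w _ => by simp)
    (fun x hx w hw y _ => dist_le_dist_add_dist_of_mem_cnbr hx (mem_inter.1 hw).1 y) hplan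
  have hopt : EMDG G u v = planCostG G u v z :=
    EMDG_eq_planCostG (isPlanG_iff.2 hz) fun z' hz' => hmin z' (isPlanG_iff.1 hz')
  refine ⟨z, isPlanG_iff.2 hz, hopt.symm, hdiag u ?_, hdiag v ?_, fun w hu hv => hdiag w ?_⟩
    <;> simp [mem_cnbr, huv.symm, *]
end

section
/- Let G* be the graph obtained from G by adding every pair {x,y} ∉ E(G) with x ∈ N_G(u)\{v}, y ∈ N_G(v)\{u}, and x ≠ y as a new edge. Then EMD_{G*}(u,v) ≤ 1 + 2/(deg_G(u)+1) − 4/(deg_G(v)+1), and hence Ric_{G*}(e) ≥ 4/(deg_G(v)+1) − 2/(deg_G(u)+1). In particular, if deg_G(v) < 2·deg_G(u)+1 then Ric_{G*}(e) > 0. -/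
open Finset
open scoped Classical

variable {V : Type*}

/-- The graph obtained from `G` by inserting every permissible pair `{x,y}` with
`x ∈ N_G(u)\{v}`, `y ∈ N_G(v)\{u}`, `x ≠ y`, `{x,y} ∉ E(G)`, as a new edge. -/
def addPerm (G : SimpleGraph V) (u v : V) : SimpleGraph V :=
  G ⊔ SimpleGraph.fromRel (fun x y => G.Adj u x ∧ x ≠ v ∧ G.Adj v y ∧ y ≠ u)

lemma mem_nbrF_iff [Fintype V] (G : SimpleGraph V) (u x : V) :
    x ∈ nbrF G u ↔ G.Adj u x := by
  simp [nbrF]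

lemma addPerm_nbrF_u [Fintype V] (G : SimpleGraph V) (u v : V) :
    nbrF (addPerm G u v) u = nbrF G u := by
  ext w
  simp only [mem_nbrF_iff, addPerm, SimpleGraph.sup_adj, SimpleGraph.fromRel_adj]
  constructor
  · rintro (h | ⟨hne, ⟨h1, -, -, -⟩ | ⟨-, -, -, h4⟩⟩)
    · exact h
    · exact absurd h1 (G.irrefl)
    · exact absurd rfl h4
  · exact Or.inl

lemma addPerm_nbrF_v [Fintype V] (G : SimpleGraph V) (u v : V) :
    nbrF (addPerm G u v) v = nbrF G v := by
  ext w
  simp only [mem_nbrF_iff, addPerm, SimpleGraph.sup_adj, SimpleGraph.fromRel_adj]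
  constructor
  · rintro (h | ⟨hne, ⟨-, h2, -, -⟩ | ⟨-, -, h3, -⟩⟩)
    · exact h
    · exact absurd rfl h2
    · exact absurd h3 (G.irrefl)
  · exact Or.inl

lemma addPerm_adj_of_adj {G : SimpleGraph V} {u v x y : V} (h : G.Adj x y) :
    (addPerm G u v).Adj x y := by
  simp only [addPerm, SimpleGraph.sup_adj]
  exact Or.inl h

lemma addPerm_adj_of_perm {G : SimpleGraph V} {u v x y : V} (hxy : x ≠ y)
    (h1 : G.Adj u x) (h2 : x ≠ v) (h3 : G.Adj v y) (h4 : y ≠ u) :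
    (addPerm G u v).Adj x y := by
  simp only [addPerm, SimpleGraph.sup_adj, SimpleGraph.fromRel_adj]
  exact Or.inr ⟨hxy, Or.inl ⟨h1, h2, h3, h4⟩⟩

lemma dist_le_one_of_adj {G : SimpleGraph V} {x y : V} (h : G.Adj x y) :
    G.dist x y ≤ 1 := by
  simpa using SimpleGraph.dist_le (SimpleGraph.Walk.cons h SimpleGraph.Walk.nil)

lemma dist_le_two_of_adj_adj {G : SimpleGraph V} {x w y : V} (h1 : G.Adj x w)
    (h2 : G.Adj w y) : G.dist x y ≤ 2 := by
  simpa using SimpleGraph.dist_le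
    (SimpleGraph.Walk.cons h1 (SimpleGraph.Walk.cons h2 SimpleGraph.Walk.nil))

/-- for the graph `G*` obtained by adding every permissible pair,
`EMD_{G*}(u,v) ≤ 1 + 2/(deg_G(u)+1) − 4/(deg_G(v)+1)`, hence
`Ric_{G*}(e) ≥ 4/(deg_G(v)+1) − 2/(deg_G(u)+1)`; in particular
`deg_G(v) < 2 deg_G(u) + 1` implies `Ric_{G*}(e) > 0`. -/
theorem stmt7 [Fintype V] (G : SimpleGraph V) (u v : V) (huv : G.Adj u v)
    (hdeg : degG G u ≤ degG G v) :
    EMDG (addPerm G u v) u v ≤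
        1 + 2 / ((degG G u : ℝ) + 1) - 4 / ((degG G v : ℝ) + 1) ∧
    4 / ((degG G v : ℝ) + 1) - 2 / ((degG G u : ℝ) + 1) ≤ RicG (addPerm G u v) u v ∧
    (degG G v < 2 * degG G u + 1 → 0 < RicG (addPerm G u v) u v) := by
  classical
  have hne : u ≠ v := huv.ne
  set G' := addPerm G u v with hG'
  have hnu : nbrF G' u = nbrF G u := by rw [hG']; exact addPerm_nbrF_u G u v
  have hnv : nbrF G' v = nbrF G v := by rw [hG']; exact addPerm_nbrF_v G u v
  have hcu : cnbr G' u = cnbr G u := by rw [cnbr, cnbr, hnu]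
  have hcv : cnbr G' v = cnbr G v := by rw [cnbr, cnbr, hnv]
  have hdegu : degG G' u = degG G u := by rw [degG, degG, hnu]
  have hdegv : degG G' v = degG G v := by rw [degG, degG, hnv]
  set du := degG G u with hdu
  set dv := degG G v with hdv
  have hvmem : v ∈ nbrF G u := (mem_nbrF_iff G u v).mpr huv
  have humem : u ∈ nbrF G v := (mem_nbrF_iff G v u).mpr huv.symm
  have hcard_u : (nbrF G u).card = du := rfl
  have hcard_v : (nbrF G v).card = dv := rfl
  have hdu1 : 1 ≤ du := by rw [← hcard_u]; exact Finset.card_pos.mpr ⟨v, hvmem⟩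
  have hdv1 : 1 ≤ dv := by rw [← hcard_v]; exact Finset.card_pos.mpr ⟨u, humem⟩
  set a : ℝ := 1 / ((du : ℝ) + 1) with ha
  set b : ℝ := 1 / ((dv : ℝ) + 1) with hb
  set M : ℝ := 1 - 2 * b with hM
  have hdupos : (0:ℝ) < (du:ℝ) + 1 := by positivity
  have hdvpos : (0:ℝ) < (dv:ℝ) + 1 := by positivity
  have hapos : 0 < a := by rw [ha]; positivity
  have hbpos : 0 < b := by rw [hb]; positivity
  have hduR : (1:ℝ) ≤ (du:ℝ) := by exact_mod_cast hdu1
  have hdvR : (1:ℝ) ≤ (dv:ℝ) := by exact_mod_cast hdv1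
  have hdudvR : (du:ℝ) ≤ (dv:ℝ) := by exact_mod_cast hdeg
  have hba : b ≤ a := by
    rw [ha, hb]
    apply one_div_le_one_div_of_le hdupos
    linarith
  have h1a : ((du:ℝ) + 1) * a = 1 := by rw [ha]; field_simp
  have h1b : ((dv:ℝ) + 1) * b = 1 := by rw [hb]; field_simp
  have h2b : 2 * b ≤ 1 := by
    rw [hb, mul_one_div]
    rw [div_le_one hdvpos]
    linarith
  have h2a : 2 * a ≤ 1 := by
    rw [ha, mul_one_div]
    rw [div_le_one hdupos]
    linarith
  have hMnonneg : 0 ≤ M := by rw [hM]; linarith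
  set A : Finset V := (nbrF G u).erase v with hA
  set B : Finset V := (nbrF G v).erase u with hB
  have hcardA : (A.card : ℝ) = (du:ℝ) - 1 := by
    rw [hA, Finset.card_erase_of_mem hvmem, hcard_u]
    rw [Nat.cast_sub hdu1, Nat.cast_one]
  have hcardB : (B.card : ℝ) = (dv:ℝ) - 1 := by
    rw [hB, Finset.card_erase_of_mem humem, hcard_v]
    rw [Nat.cast_sub hdv1, Nat.cast_one]
  have hBb : (B.card : ℝ) * b = M := by
    rw [hcardB, hM, hb]
    field_simp
    ring
  -- facts about members of A and B
  have hAfact : ∀ x ∈ A, x ≠ v ∧ x ≠ u ∧ G.Adj u x := by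
    intro x hx
    rw [hA, Finset.mem_erase, mem_nbrF_iff] at hx
    exact ⟨hx.1, fun h => G.irrefl (h ▸ hx.2), hx.2⟩
  have hBfact : ∀ y ∈ B, y ≠ u ∧ y ≠ v ∧ G.Adj v y := by
    intro y hy
    rw [hB, Finset.mem_erase, mem_nbrF_iff] at hy
    exact ⟨hy.1, fun h => G.irrefl (h ▸ hy.2), hy.2⟩
  have hMpos_of_dv2 : 2 ≤ dv → 0 < M := by
    intro h2
    have : (2:ℝ) ≤ (dv:ℝ) := by exact_mod_cast h2
    rw [hM, hb]
    have : 2 * (1 / ((dv:ℝ) + 1)) < 1 := by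
      rw [mul_one_div, div_lt_one hdvpos]; linarith
    linarith
  have hdv2_of_B : ∀ y ∈ B, 2 ≤ dv := by
    intro y hy
    rw [← hcard_v]
    exact Finset.one_lt_card.mpr ⟨y, Finset.mem_of_mem_erase hy, u, humem, (hBfact y hy).1⟩
  have hdu2_of_A : ∀ x ∈ A, 2 ≤ du := by
    intro x hx
    rw [← hcard_u]
    exact Finset.one_lt_card.mpr ⟨x, Finset.mem_of_mem_erase hx, v, hvmem, (hAfact x hx).1⟩
  have hABM : (B.card : ℝ) * ((a - b) * b / M) = a - b := by
    by_cases hM0 : M = 0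
    · have hbv : b = 1/2 := by rw [hM] at hM0; linarith
      have hdveq : (dv:ℝ) = 1 := by
        rw [hb] at hbv
        field_simp at hbv
        linarith
      have hab : a = b := by
        have hdueq : (du:ℝ) = 1 := by linarith
        rw [ha, hb, hdueq, hdveq]
      rw [hab, hM0]
      simp
    · rw [show (B.card:ℝ) * ((a-b)*b/M) = (a-b) * ((B.card:ℝ)*b/M) by ring,
        hBb, div_self hM0, mul_one]
  have hBab : 2 ≤ dv → (B.card : ℝ) * (a * b / M) = a := by
    intro h2
    have hM0 : M ≠ 0 := ne_of_gt (hMpos_of_dv2 h2)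
    rw [show (B.card:ℝ) * (a*b/M) = a * ((B.card:ℝ)*b/M) by ring,
      hBb, div_self hM0, mul_one]
  -- sum splitting
  have hv_not : v ∉ nbrF G v := by
    rw [mem_nbrF_iff]; exact G.irrefl
  have hu_not : u ∉ nbrF G u := by
    rw [mem_nbrF_iff]; exact G.irrefl
  have hsplitv : ∀ f : V → ℝ, ∑ y ∈ cnbr G v, f y = f v + f u + ∑ y ∈ B, f y := by
    intro f
    rw [cnbr, Finset.sum_insert hv_not, ← Finset.insert_erase humem,
      Finset.sum_insert (Finset.notMem_erase _ _), ← hB]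
    ring
  have hsplitu : ∀ f : V → ℝ, ∑ x ∈ cnbr G u, f x = f u + f v + ∑ x ∈ A, f x := by
    intro f
    rw [cnbr, Finset.sum_insert hu_not, ← Finset.insert_erase hvmem,
      Finset.sum_insert (Finset.notMem_erase _ _), ← hA]
    ring
  -- the transport plan
  set z : V → V → ℝ := fun x y =>
    if y = u then (if x = u then b else 0)
    else if y = v then (if x = v then b else 0)
    else if x = u ∨ x = v then (a - b) * b / M
    else a * b / M with hzdef
  have hz_uu : z u u = b := by simp [hzdef]
  have hz_vv : z v v = b := by simp [hzdef, hne.symm]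
  have hz_uv : z u v = 0 := by simp [hzdef, hne, hne.symm]
  have hz_vu : z v u = 0 := by simp [hzdef, hne, hne.symm]
  have hz_B : ∀ x, ∀ y ∈ B, z x y =
      if x = u ∨ x = v then (a - b) * b / M else a * b / M := by
    intro x y hy
    obtain ⟨hyu, hyv, hadj⟩ := hBfact y hy
    simp [hzdef, hyu, hyv]
  have hz_Au : ∀ x ∈ A, z x u = 0 := by
    intro x hx
    obtain ⟨hxv, hxu, hadj⟩ := hAfact x hx
    simp [hzdef, hxu]
  have hz_Av : ∀ x ∈ A, z x v = 0 := by
    intro x hx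
    obtain ⟨hxv, hxu, hadj⟩ := hAfact x hx
    simp [hzdef, hne, hne.symm, hxv]
  have hznn : ∀ x y, 0 ≤ z x y := by
    intro x y
    have hab : 0 ≤ (a - b) * b / M :=
      div_nonneg (mul_nonneg (by linarith) hbpos.le) hMnonneg
    have hab2 : 0 ≤ a * b / M :=
      div_nonneg (mul_nonneg hapos.le hbpos.le) hMnonneg
    rw [hzdef]
    dsimp only
    split_ifs <;> first | exact hbpos.le | exact le_refl 0 | exact hab | exact hab2
  -- row sums
  have hrow : ∀ x ∈ cnbr G u, ∑ y ∈ cnbr G v, z x y = a := by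
    intro x hx
    rw [hsplitv (z x), Finset.sum_congr rfl (hz_B x), Finset.sum_const,
      nsmul_eq_mul]
    rw [cnbr, Finset.mem_insert] at hx
    rcases hx with hxu | hxn
    · subst hxu
      rw [hz_uv, hz_uu]
      rw [if_pos (Or.inl rfl), hABM]
      ring
    · by_cases hxv : x = v
      · subst hxv
        rw [hz_vv, hz_vu, if_pos (Or.inr rfl), hABM]
        ring
      · have hxu : x ≠ u := fun h => hu_not (h ▸ hxn)
        have hxA : x ∈ A := by
          rw [hA, Finset.mem_erase]; exact ⟨hxv, hxn⟩
        rw [hz_Av x hxA, hz_Au x hxA, if_neg (by tauto)]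
        rw [hBab (le_trans (hdu2_of_A x hxA) hdeg)]
        ring
  -- column sums
  have hcol : ∀ y ∈ cnbr G v, ∑ x ∈ cnbr G u, z x y = b := by
    intro y hy
    rw [hsplitu (fun x => z x y)]
    rw [cnbr, Finset.mem_insert] at hy
    rcases hy with hyv | hyn
    · subst hyv
      rw [hz_uv, hz_vv]
      rw [Finset.sum_congr rfl (hz_Av), Finset.sum_const_zero]
      ring
    · by_cases hyu : y = u
      · subst hyu
        rw [hz_uu, hz_vu]
        rw [Finset.sum_congr rfl (hz_Au), Finset.sum_const_zero]
        ring
      · have hyB : y ∈ B := by rw [hB, Finset.mem_erase]; exact ⟨hyu, hyn⟩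
        have hdv2 : 2 ≤ dv := hdv2_of_B y hyB
        have hM0 : M ≠ 0 := ne_of_gt (hMpos_of_dv2 hdv2)
        have hzu : z u y = (a - b) * b / M := by
          rw [hz_B u y hyB, if_pos (Or.inl rfl)]
        have hzv : z v y = (a - b) * b / M := by
          rw [hz_B v y hyB, if_pos (Or.inr rfl)]
        have hzA : ∀ x ∈ A, z x y = a * b / M := by
          intro x hx
          obtain ⟨hxv, hxu, _⟩ := hAfact x hx
          rw [hz_B x y hyB, if_neg (by tauto)]
        rw [hzu, hzv, Finset.sum_congr rfl hzA, Finset.sum_const, nsmul_eq_mul,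
          hcardA]
        rw [show (a-b)*b/M + (a-b)*b/M + ((du:ℝ)-1)*(a*b/M)
            = (2*(a-b)*b + ((du:ℝ)-1)*(a*b))/M by ring]
        rw [div_eq_iff hM0, hM]
        linear_combination b * h1a
  have hplan : IsPlanG G' u v z := by
    refine ⟨hznn, ?_, ?_⟩
    · intro x hx
      rw [hcu] at hx
      rw [hcv, hdegu, ← ha]
      exact hrow x hx
    · intro y hy
      rw [hcv] at hy
      rw [hcu, hdegv, ← hb]
      exact hcol y hy
  -- distance bounds
  have hadjuv : G'.Adj u v := by rw [hG']; exact addPerm_adj_of_adj huv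
  have hdistB_u : ∀ y ∈ B, (G'.dist u y : ℝ) ≤ 2 := by
    intro y hy
    obtain ⟨hyu, hyv, hadj⟩ := hBfact y hy
    have : G'.dist u y ≤ 2 :=
      dist_le_two_of_adj_adj hadjuv (by rw [hG']; exact addPerm_adj_of_adj hadj)
    exact_mod_cast this
  have hdistB_v : ∀ y ∈ B, (G'.dist v y : ℝ) ≤ 1 := by
    intro y hy
    obtain ⟨hyu, hyv, hadj⟩ := hBfact y hy
    have : G'.dist v y ≤ 1 :=
      dist_le_one_of_adj (by rw [hG']; exact addPerm_adj_of_adj hadj)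
    exact_mod_cast this
  have hdistAB : ∀ x ∈ A, ∀ y ∈ B, (G'.dist x y : ℝ) ≤ 1 := by
    intro x hx y hy
    obtain ⟨hxv, hxu, hadjx⟩ := hAfact x hx
    obtain ⟨hyu, hyv, hadjy⟩ := hBfact y hy
    by_cases hxy : x = y
    · subst hxy
      rw [SimpleGraph.dist_self]
      norm_num
    · have : G'.dist x y ≤ 1 :=
        dist_le_one_of_adj (by rw [hG']; exact addPerm_adj_of_perm hxy hadjx hxv hadjy hyu)
      exact_mod_cast this
  -- cost bound
  have hcnn : 0 ≤ (a - b) * b / M :=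
    div_nonneg (mul_nonneg (by linarith) hbpos.le) hMnonneg
  have hcnn2 : 0 ≤ a * b / M :=
    div_nonneg (mul_nonneg hapos.le hbpos.le) hMnonneg
  have hrow_u : ∑ y ∈ cnbr G v, (G'.dist u y : ℝ) * z u y ≤ 2 * (a - b) := by
    rw [hsplitv (fun y => (G'.dist u y : ℝ) * z u y)]
    have e1 : (G'.dist u v : ℝ) * z u v = 0 := by rw [hz_uv]; ring
    have e2 : (G'.dist u u : ℝ) * z u u = 0 := by
      rw [SimpleGraph.dist_self]; simp
    rw [e1, e2]
    have hle : ∑ y ∈ B, (G'.dist u y : ℝ) * z u y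
        ≤ ∑ y ∈ B, 2 * ((a - b) * b / M) := by
      apply Finset.sum_le_sum
      intro y hy
      rw [hz_B u y hy, if_pos (Or.inl rfl)]
      exact mul_le_mul_of_nonneg_right (hdistB_u y hy) hcnn
    rw [Finset.sum_const, nsmul_eq_mul] at hle
    calc 0 + 0 + ∑ y ∈ B, (G'.dist u y : ℝ) * z u y
        ≤ 0 + 0 + (B.card : ℝ) * (2 * ((a - b) * b / M)) := by linarith
      _ = 2 * ((B.card : ℝ) * ((a - b) * b / M)) := by ring
      _ = 2 * (a - b) := by rw [hABM]
  have hrow_v : ∑ y ∈ cnbr G v, (G'.dist v y : ℝ) * z v y ≤ (a - b) := by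
    rw [hsplitv (fun y => (G'.dist v y : ℝ) * z v y)]
    have e1 : (G'.dist v v : ℝ) * z v v = 0 := by
      rw [SimpleGraph.dist_self]; simp
    have e2 : (G'.dist v u : ℝ) * z v u = 0 := by rw [hz_vu]; ring
    rw [e1, e2]
    have hle : ∑ y ∈ B, (G'.dist v y : ℝ) * z v y
        ≤ ∑ y ∈ B, 1 * ((a - b) * b / M) := by
      apply Finset.sum_le_sum
      intro y hy
      rw [hz_B v y hy, if_pos (Or.inr rfl)]
      exact mul_le_mul_of_nonneg_right (hdistB_v y hy) hcnn
    rw [Finset.sum_const, nsmul_eq_mul] at hle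
    calc 0 + 0 + ∑ y ∈ B, (G'.dist v y : ℝ) * z v y
        ≤ 0 + 0 + (B.card : ℝ) * (1 * ((a - b) * b / M)) := by linarith
      _ = (B.card : ℝ) * ((a - b) * b / M) := by ring
      _ = a - b := hABM
  have hrow_A : ∀ x ∈ A, ∑ y ∈ cnbr G v, (G'.dist x y : ℝ) * z x y
      ≤ (B.card : ℝ) * (a * b / M) := by
    intro x hx
    obtain ⟨hxv, hxu, _⟩ := hAfact x hx
    rw [hsplitv (fun y => (G'.dist x y : ℝ) * z x y)]
    have e1 : (G'.dist x v : ℝ) * z x v = 0 := by rw [hz_Av x hx]; ring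
    have e2 : (G'.dist x u : ℝ) * z x u = 0 := by rw [hz_Au x hx]; ring
    rw [e1, e2]
    have hle : ∑ y ∈ B, (G'.dist x y : ℝ) * z x y
        ≤ ∑ y ∈ B, 1 * (a * b / M) := by
      apply Finset.sum_le_sum
      intro y hy
      rw [hz_B x y hy, if_neg (by tauto)]
      exact mul_le_mul_of_nonneg_right (hdistAB x hx y hy) hcnn2
    rw [Finset.sum_const, nsmul_eq_mul] at hle
    calc 0 + 0 + ∑ y ∈ B, (G'.dist x y : ℝ) * z x y
        ≤ 0 + 0 + (B.card : ℝ) * (1 * (a * b / M)) := by linarith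
      _ = (B.card : ℝ) * (a * b / M) := by ring
  have hAT : (A.card : ℝ) * ((B.card : ℝ) * (a * b / M)) ≤ 1 - 2 * a := by
    rcases Finset.eq_empty_or_nonempty A with hAe | ⟨x, hxA⟩
    · rw [hAe]
      simp
      linarith
    · have hdu2 : 2 ≤ du := hdu2_of_A x hxA
      rw [hBab (le_trans hdu2 hdeg), hcardA]
      have : ((du:ℝ) - 1) * a = 1 - 2 * a := by linear_combination h1a
      rw [this]
  have hcost : planCostG G' u v z ≤ 1 + a - 3 * b := by
    rw [planCostG, hcu, hcv]
    rw [hsplitu (fun x => ∑ y ∈ cnbr G v, (G'.dist x y : ℝ) * z x y)]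
    have hsumA : ∑ x ∈ A, (∑ y ∈ cnbr G v, (G'.dist x y : ℝ) * z x y)
        ≤ ∑ x ∈ A, (B.card : ℝ) * (a * b / M) := Finset.sum_le_sum hrow_A
    rw [Finset.sum_const, nsmul_eq_mul] at hsumA
    have : (A.card : ℝ) * ((B.card : ℝ) * (a * b / M)) ≤ 1 - 2 * a := hAT
    calc (∑ y ∈ cnbr G v, (G'.dist u y : ℝ) * z u y)
          + (∑ y ∈ cnbr G v, (G'.dist v y : ℝ) * z v y)
          + ∑ x ∈ A, (∑ y ∈ cnbr G v, (G'.dist x y : ℝ) * z x y)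
        ≤ 2 * (a - b) + (a - b) + (1 - 2 * a) := by linarith
      _ = 1 + a - 3 * b := by ring
  -- EMD bound
  have hEMD : EMDG G' u v ≤ 1 + 2 * a - 4 * b := by
    have hbdd : BddBelow {t | ∃ w, IsPlanG G' u v w ∧ planCostG G' u v w = t} := by
      refine ⟨0, ?_⟩
      rintro t ⟨w, hw, rfl⟩
      apply Finset.sum_nonneg
      intro x hx
      apply Finset.sum_nonneg
      intro y hy
      exact mul_nonneg (Nat.cast_nonneg _) (hw.1 x y)
    have hmem : planCostG G' u v z ∈
        {t | ∃ w, IsPlanG G' u v w ∧ planCostG G' u v w = t} := ⟨z, hplan, rfl⟩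
    calc EMDG G' u v ≤ planCostG G' u v z := csInf_le hbdd hmem
      _ ≤ 1 + a - 3 * b := hcost
      _ ≤ 1 + 2 * a - 4 * b := by linarith
  have e2a : 2 / ((du:ℝ) + 1) = 2 * a := by rw [ha]; ring
  have e4b : 4 / ((dv:ℝ) + 1) = 4 * b := by rw [hb]; ring
  refine ⟨?_, ?_, ?_⟩
  · rw [e2a, e4b]
    exact hEMD
  · rw [e2a, e4b, RicG]
    linarith
  · intro hlt
    rw [RicG]
    have hltR : (dv:ℝ) < 2 * (du:ℝ) + 1 := by exact_mod_cast hlt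
    have h24 : 2 * a < 4 * b := by
      rw [ha, hb, mul_one_div, mul_one_div, div_lt_div_iff₀ hdupos hdvpos]
      linarith
    linarith
end

section
/- Suppose Ric_G(e) > 0. Then there exists a set E' ⊆ E(G) of edges, none incident to u or v, with Ric_{G−E'}(e) < 0 if and only if Ric_{G°}(e) < 0, where G° is the graph obtained from G by deleting every edge {u',v'} ∈ E(G) with u' ∉ {u,v} and v' ∉ {u,v}. -/
/-!
Deleting edges that avoid `u` and `v` changes neither `N[u]` nor `N[v]`, hence neither the
set of transport plans, while it can only lengthen distances. Distances between `N[u]` and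
`N[v]` stay finite in `G°` thanks to the path through the edge `uv`, so the cost of every plan,
and with it `EMD`, is largest in `G°`: the curvature of `e` is smallest in `G°` among all
graphs `G − E'`.
-/

open Finset
open scoped Classical

variable {V : Type*}

/-- The graph obtained from `G` by deleting every edge `{u',v'}` with
`u' ∉ {u,v}` and `v' ∉ {u,v}`. -/
def delInner (G : SimpleGraph V) (u v : V) : SimpleGraph V where
  Adj x y := G.Adj x y ∧ (x = u ∨ x = v ∨ y = u ∨ y = v)
  symm := by
    constructor
    intro x y h
    exact ⟨h.1.symm, by tauto⟩
  loopless := by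
    constructor
    intro x h
    exact G.irrefl h.1

namespace SimpleGraph

variable {G G₁ G₂ : SimpleGraph V} {u v w x y : V}

lemma delInner_le (G : SimpleGraph V) (u v : V) : delInner G u v ≤ G := fun _ _ h => h.1

variable [Fintype V]

lemma mem_cnbr : x ∈ cnbr G u ↔ x = u ∨ G.Adj u x := by
  simp [cnbr, nbrF]

lemma card_cnbr (G : SimpleGraph V) (w : V) : (cnbr G w).card = degG G w + 1 := by
  rw [cnbr, card_insert_of_notMem (by simp [nbrF]), degG]

lemma nbrF_mono (h : G₁ ≤ G₂) (w : V) : nbrF G₁ w ⊆ nbrF G₂ w := fun x hx => by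
  simp only [nbrF, mem_filter, mem_univ, true_and] at hx ⊢
  exact h hx

lemma nbrF_delInner (hw : w = u ∨ w = v) : nbrF (delInner G u v) w = nbrF G w := by
  ext x
  simp only [nbrF, mem_filter, mem_univ, true_and]
  exact ⟨And.left, fun h => ⟨h, by tauto⟩⟩

lemma nbrF_eq_of_delInner_le_of_le (h₁ : delInner G u v ≤ G₁) (h₂ : G₁ ≤ G)
    (hw : w = u ∨ w = v) : nbrF (delInner G u v) w = nbrF G₁ w :=
  (nbrF_mono h₁ w).antisymm ((nbrF_mono h₂ w).trans_eq (nbrF_delInner hw).symm)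

lemma reachable_of_mem_cnbr (huv : G.Adj u v) (hx : x ∈ cnbr G u) (hy : y ∈ cnbr G v) :
    G.Reachable x y := by
  have hxu : G.Reachable x u := by
    rcases mem_cnbr.1 hx with rfl | hadj
    exacts [.rfl, hadj.symm.reachable]
  have hvy : G.Reachable v y := by
    rcases mem_cnbr.1 hy with rfl | hadj
    exacts [.rfl, hadj.reachable]
  exact hxu.trans (huv.reachable.trans hvy)

lemma exists_isPlanG (G : SimpleGraph V) (u v : V) : ∃ z, IsPlanG G u v z := by
  have hu : (degG G u : ℝ) + 1 ≠ 0 := by positivity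
  have hv : (degG G v : ℝ) + 1 ≠ 0 := by positivity
  refine ⟨fun _ _ => 1 / ((degG G u : ℝ) + 1) * (1 / ((degG G v : ℝ) + 1)),
    fun _ _ => by positivity, fun _ _ => ?_, fun _ _ => ?_⟩ <;>
  · rw [sum_const, card_cnbr, nsmul_eq_mul]
    push_cast
    field_simp

lemma planCostG_nonneg {z : V → V → ℝ} (hz : ∀ x y, 0 ≤ z x y) : 0 ≤ planCostG G u v z :=
  sum_nonneg fun x _ => sum_nonneg fun y _ => mul_nonneg (Nat.cast_nonneg _) (hz x y)

lemma EMDG_le_planCostG {z : V → V → ℝ} (hz : IsPlanG G u v z) :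
    EMDG G u v ≤ planCostG G u v z :=
  csInf_le ⟨0, by rintro _ ⟨z', hz', rfl⟩; exact planCostG_nonneg hz'.1⟩ ⟨z, hz, rfl⟩

lemma le_EMDG {t : ℝ} (h : ∀ z, IsPlanG G u v z → t ≤ planCostG G u v z) : t ≤ EMDG G u v := by
  obtain ⟨z, hz⟩ := exists_isPlanG G u v
  exact le_csInf ⟨_, z, hz, rfl⟩ (by rintro _ ⟨z', hz', rfl⟩; exact h z' hz')

lemma isPlanG_congr (hu : nbrF G₁ u = nbrF G₂ u) (hv : nbrF G₁ v = nbrF G₂ v)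
    (z : V → V → ℝ) : IsPlanG G₁ u v z ↔ IsPlanG G₂ u v z := by
  simp only [IsPlanG, cnbr, degG, hu, hv]

lemma planCostG_le_of_le (hle : G₁ ≤ G₂) (hu : nbrF G₁ u = nbrF G₂ u)
    (hv : nbrF G₁ v = nbrF G₂ v) (huv : G₁.Adj u v) {z : V → V → ℝ} (hz : ∀ x y, 0 ≤ z x y) :
    planCostG G₂ u v z ≤ planCostG G₁ u v z := by
  unfold planCostG
  rw [cnbr, cnbr, ← hu, ← hv]
  refine sum_le_sum fun x hx => sum_le_sum fun y hy => mul_le_mul_of_nonneg_right ?_ (hz x y)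
  exact_mod_cast (reachable_of_mem_cnbr huv hx hy).dist_anti hle

lemma RicG_le_of_le (hle : G₁ ≤ G₂) (hu : nbrF G₁ u = nbrF G₂ u)
    (hv : nbrF G₁ v = nbrF G₂ v) (huv : G₁.Adj u v) : RicG G₁ u v ≤ RicG G₂ u v := by
  refine sub_le_sub_left (le_EMDG fun z hz => ?_) 1
  exact (EMDG_le_planCostG ((isPlanG_congr hu hv z).1 hz)).trans
    (planCostG_le_of_le hle hu hv huv hz.1)

lemma RicG_delInner_le (huv : G.Adj u v) (h₁ : delInner G u v ≤ G₁) (h₂ : G₁ ≤ G) :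
    RicG (delInner G u v) u v ≤ RicG G₁ u v :=
  RicG_le_of_le h₁ (nbrF_eq_of_delInner_le_of_le h₁ h₂ (.inl rfl))
    (nbrF_eq_of_delInner_le_of_le h₁ h₂ (.inr rfl)) ⟨huv, .inl rfl⟩

end SimpleGraph

-- `delInner G u v ≤ G' ≤ G` says exactly that `G' = G − E'` for a set `E'` of edges of `G`
-- not incident to `u` or `v`.
theorem stmt13_general [Fintype V] (G : SimpleGraph V) (u v : V) (huv : G.Adj u v) :
    (∃ G' : SimpleGraph V, delInner G u v ≤ G' ∧ G' ≤ G ∧ RicG G' u v < 0) ↔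
      RicG (delInner G u v) u v < 0 :=
  ⟨fun ⟨_, h₁, h₂, hneg⟩ => (SimpleGraph.RicG_delInner_le huv h₁ h₂).trans_lt hneg,
    fun h => ⟨_, le_rfl, SimpleGraph.delInner_le G u v, h⟩⟩

/-- if `Ric_G(e) > 0`, then some set `E' ⊆ E(G)` of edges not incident to
`u` or `v` has `Ric_{G−E'}(e) < 0` iff `Ric_{G°}(e) < 0`, where `G°` deletes all edges
avoiding `u` and `v`.  (A graph `G'` with `G° ≤ G' ≤ G` is exactly a graph of the form
`G − E'` for such a set `E'`.) -/
theorem stmt13 [Fintype V] (G : SimpleGraph V) (u v : V) (huv : G.Adj u v)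
    (hdeg : degG G u ≤ degG G v) (hpos : 0 < RicG G u v) :
    (∃ G' : SimpleGraph V, delInner G u v ≤ G' ∧ G' ≤ G ∧ RicG G' u v < 0) ↔
      RicG (delInner G u v) u v < 0 :=
  stmt13_general G u v huv
end
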